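/- arXiv:1106.0809 — 14 statements merged into one kernel-verified Lean document; each statement's English description precedes it below -/
import Mathlib

section
/- A circulant matrix A ∈ M_n(ℚ) with representer polynomial γ_A(x) is singular if and only if deg(gcd(γ_A(x), x^n − 1)) ≥ 1. -/
/-!
Identify `w : ZMod n → R` with the polynomial `∑ wᵢ Xⁱ` of degree `< n`. Evaluating at a root of
`Xⁿ - 1` shows that the circulant matrix of `a` acts as multiplication by `γ_a` modulo `Xⁿ - 1`,
so `A` is singular iff `Xⁿ - 1 ∣ γ_a q` for some nonzero `q` of degree `< n`. If `γ_a` and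
`Xⁿ - 1` are coprime this forces `Xⁿ - 1 ∣ q`, impossible; otherwise `q = (Xⁿ - 1) / gcd` works.
-/

open Polynomial
open scoped Matrix

namespace Polynomial

theorem monic_X_pow_sub_one {R : Type*} [Ring R] (n : ℕ) [NeZero n] :
    (X ^ n - 1 : R[X]).Monic := by
  simpa using monic_X_pow_sub_C (1 : R) (NeZero.ne n)

theorem degree_X_pow_sub_one {R : Type*} [Ring R] [Nontrivial R] (n : ℕ) [NeZero n] :
    (X ^ n - 1 : R[X]).degree = n := by
  simpa using degree_X_pow_sub_C (NeZero.pos n) (1 : R)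

variable {K : Type*} [Field K] [DecidableEq K[X]]

theorem exists_degree_lt_dvd_mul_iff_not_isCoprime {f m : K[X]} (hm : m ≠ 0) :
    (∃ q ≠ 0, q.degree < m.degree ∧ m ∣ f * q) ↔ ¬IsCoprime f m := by
  constructor
  · rintro ⟨q, hq0, hdeg, hdvd⟩ hcop
    exact hq0 (eq_zero_of_dvd_of_degree_lt (hcop.symm.dvd_of_dvd_mul_left hdvd) hdeg)
  · intro hncop
    obtain ⟨q, hq⟩ := EuclideanDomain.gcd_dvd_right f m
    obtain ⟨f', hf'⟩ := EuclideanDomain.gcd_dvd_left f m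
    set g := EuclideanDomain.gcd f m
    have hg0 : g ≠ 0 := fun h => hm (by rw [hq, h, zero_mul])
    have hq0 : q ≠ 0 := fun h => hm (by rw [hq, h, mul_zero])
    have hg : 0 < g.degree :=
      degree_pos_of_ne_zero_of_nonunit hg0 fun hu => hncop (EuclideanDomain.gcd_isUnit_iff.1 hu)
    refine ⟨q, hq0, ?_, f', by rw [hq, mul_right_comm, ← hf']⟩
    rw [degree_eq_natDegree hg0, Nat.cast_pos] at hg
    rw [hq, degree_mul, degree_eq_natDegree hg0, degree_eq_natDegree hq0]
    exact_mod_cast (by omega : q.natDegree < g.natDegree + q.natDegree)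

theorem one_le_degree_gcd_iff_not_isCoprime {f m : K[X]} (hm : m ≠ 0) :
    1 ≤ (EuclideanDomain.gcd f m).degree ↔ ¬IsCoprime f m := by
  have hg0 : EuclideanDomain.gcd f m ≠ 0 := fun h => hm (EuclideanDomain.gcd_eq_zero_iff.1 h).2
  rw [Nat.WithBot.one_le_iff_zero_lt, ← EuclideanDomain.gcd_isUnit_iff]
  exact ⟨fun h hu => (isUnit_iff_degree_eq_zero.1 hu ▸ h).false,
    degree_pos_of_ne_zero_of_nonunit hg0⟩

end Polynomial

section Representer

variable {R : Type*} [CommRing R] {n : ℕ} [NeZero n]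

noncomputable def representerPoly (a : ZMod n → R) : R[X] :=
  ∑ i, C (a i) * X ^ i.val

@[simp]
theorem representerPoly_zero : representerPoly (0 : ZMod n → R) = 0 := by
  simp [representerPoly]

theorem coeff_representerPoly_val (a : ZMod n → R) (i : ZMod n) :
    (representerPoly a).coeff i.val = a i := by
  rw [representerPoly, finsetSum_coeff, Finset.sum_eq_single i]
  · simp
  · intro j _ hj
    rw [coeff_C_mul_X_pow, if_neg fun h => hj (ZMod.val_injective n h.symm)]
  · simp

theorem representerPoly_injective : Function.Injective (representerPoly (R := R) (n := n)) :=
  fun a b h => funext fun i => by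
    rw [← coeff_representerPoly_val a, h, coeff_representerPoly_val]

theorem representerPoly_eq_zero_iff {a : ZMod n → R} : representerPoly a = 0 ↔ a = 0 :=
  representerPoly_injective.eq_iff' representerPoly_zero

theorem degree_representerPoly_lt (a : ZMod n → R) : (representerPoly a).degree < n := by
  refine (degree_sum_le _ _).trans_lt ((Finset.sup_lt_iff (WithBot.bot_lt_coe n)).2 fun i _ => ?_)
  exact (degree_C_mul_X_pow_le _ _).trans_lt (WithBot.coe_lt_coe.2 (ZMod.val_lt i))

theorem representerPoly_coeff_of_degree_lt {q : R[X]} (hq : q.degree < n) :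
    representerPoly (fun i : ZMod n => q.coeff i.val) = q := by
  ext k
  rw [representerPoly, finsetSum_coeff]
  by_cases hk : k < n
  · rw [Finset.sum_eq_single (k : ZMod n)]
    · rw [coeff_C_mul_X_pow, ZMod.val_cast_of_lt hk, if_pos rfl]
    · intro j _ hj
      rw [coeff_C_mul_X_pow, if_neg]
      rintro rfl
      exact hj (ZMod.natCast_zmod_val j).symm
    · simp
  · rw [Finset.sum_eq_zero fun j _ => ?_, coeff_eq_zero_of_degree_lt
      (hq.trans_le (by exact_mod_cast not_lt.1 hk))]
    rw [coeff_C_mul_X_pow, if_neg]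
    rintro rfl
    exact hk (ZMod.val_lt j)

theorem exists_ne_zero_representerPoly_iff {P : R[X] → Prop} :
    (∃ a ≠ 0, P (representerPoly (n := n) a)) ↔ ∃ q ≠ 0, q.degree < (n : WithBot ℕ) ∧ P q := by
  constructor
  · rintro ⟨a, ha, hP⟩
    exact ⟨_, representerPoly_eq_zero_iff.not.2 ha, degree_representerPoly_lt a, hP⟩
  · rintro ⟨q, hq, hdeg, hP⟩
    refine ⟨fun i => q.coeff i.val, fun h => hq ?_, by rwa [representerPoly_coeff_of_degree_lt hdeg]⟩
    rw [← representerPoly_coeff_of_degree_lt hdeg, h, representerPoly_zero]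

theorem aeval_representerPoly_circulant_mulVec {S : Type*} [CommRing S] [Algebra R S] {r : S}
    (hr : r ^ n = 1) (a w : ZMod n → R) :
    aeval r (representerPoly (Matrix.circulant a *ᵥ w)) =
      aeval r (representerPoly a) * aeval r (representerPoly w) := by
  have hpow (i j : ZMod n) : r ^ (i + j).val = r ^ i.val * r ^ j.val := by
    rw [← pow_add, pow_eq_pow_mod (i.val + j.val) hr, ZMod.val_add]
  simp only [representerPoly, map_sum, map_mul, aeval_C, map_pow, aeval_X, Matrix.mulVec,
    dotProduct, Matrix.circulant_apply, Finset.sum_mul, Finset.mul_sum]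
  rw [Finset.sum_comm]
  refine Finset.sum_congr rfl fun j _ => ?_
  refine (Fintype.sum_equiv (Equiv.addRight j) _ _ fun i => ?_).symm
  rw [Equiv.coe_addRight, add_sub_cancel_right, hpow]
  ring

theorem representerPoly_circulant_mulVec [Nontrivial R] (a w : ZMod n → R) :
    representerPoly (Matrix.circulant a *ᵥ w) =
      representerPoly a * representerPoly w %ₘ (X ^ n - 1) := by
  have hroot : AdjoinRoot.root (X ^ n - 1 : R[X]) ^ n = 1 := by
    have := AdjoinRoot.eval₂_root (X ^ n - 1 : R[X])
    rwa [eval₂_sub, eval₂_X_pow, eval₂_one, sub_eq_zero] at this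
  have hdvd : (X ^ n - 1 : R[X]) ∣ representerPoly (Matrix.circulant a *ᵥ w) -
      representerPoly a * representerPoly w := by
    rw [← AdjoinRoot.mk_eq_mk, ← AdjoinRoot.aeval_eq, ← AdjoinRoot.aeval_eq, map_mul,
      aeval_representerPoly_circulant_mulVec hroot]
  rw [← modByMonic_eq_of_dvd_sub (monic_X_pow_sub_one n) hdvd, eq_comm,
    modByMonic_eq_self_iff (monic_X_pow_sub_one n), degree_X_pow_sub_one]
  exact degree_representerPoly_lt _

theorem X_pow_sub_one_dvd_representerPoly_mul_iff [Nontrivial R] (a w : ZMod n → R) :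
    (X ^ n - 1 : R[X]) ∣ representerPoly a * representerPoly w ↔
      Matrix.circulant a *ᵥ w = 0 := by
  rw [← modByMonic_eq_zero_iff_dvd (monic_X_pow_sub_one n), ← representerPoly_circulant_mulVec,
    representerPoly_eq_zero_iff]

end Representer

/-- A circulant matrix `A ∈ M_n(ℚ)` with representer polynomial `γ_A` is
singular iff `deg (gcd (γ_A, xⁿ - 1)) ≥ 1`. -/
theorem circulant_singular_iff_gcd_degree (n : ℕ) [NeZero n] (a : ZMod n → ℚ) :
    (Matrix.of fun i j : ZMod n => a (j - i)).det = 0 ↔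
      1 ≤ (EuclideanDomain.gcd (∑ i : ZMod n, C (a i) * X ^ i.val)
            (X ^ n - 1 : Polynomial ℚ)).degree := by
  have hm : (X ^ n - 1 : ℚ[X]) ≠ 0 := (monic_X_pow_sub_one n).ne_zero
  change _ ↔ 1 ≤ (EuclideanDomain.gcd (representerPoly a) _).degree
  rw [one_le_degree_gcd_iff_not_isCoprime hm, ← exists_degree_lt_dvd_mul_iff_not_isCoprime hm,
    degree_X_pow_sub_one, ← exists_ne_zero_representerPoly_iff]
  calc (Matrix.of fun i j : ZMod n => a (j - i)).det = 0
      ↔ (Matrix.circulant a).det = 0 := by rw [← Matrix.det_transpose]; rfl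
    _ ↔ ∃ w ≠ 0, Matrix.circulant a *ᵥ w = 0 := Matrix.exists_mulVec_eq_zero_iff.symm
    _ ↔ _ := by simp_rw [X_pow_sub_one_dvd_representerPoly_mul_iff]
end

section
/- Let A ∈ M_n(ℚ) be the circulant matrix whose first row consists of s copies of a followed by t copies of b, where s + t = n and a ≠ b. Then det(A) = (sa + tb)(a − b)^{n−1} if gcd(s, n) = 1, and det(A) = 0 otherwise. -/
/-!
With `g k = a` for `k < s` and `g k = b` otherwise (indices in `ZMod n`), the matrix is the
transpose of `circulant g`. Subtracting from every nonzero row of `circulant g` its predecessor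
keeps the determinant, leaves row `0` alone and, since `g` only jumps at `0` and at `s`, turns
row `x` into `(a - b) (e_x - e_{x-s})`.

If `s` is a unit mod `n`, listing the indices as `0, s, 2s, …` makes these rows bidiagonal; adding
to each column all later ones then gives an upper triangular matrix with diagonal
`sa + tb, a - b, …, a - b`. Otherwise `d = gcd(s, n) > 1`, and the indicator of the residue
class of `1` mod `d` is `s`-periodic and vanishes at `0`, so it annihilates the matrix from the
left.
-/

open Matrix Finset

def finEquivZMod (n : ℕ) [NeZero n] : Fin n ≃ ZMod n where
  toFun k := (k : ℕ)
  invFun x := ⟨x.val, x.val_lt⟩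
  left_inv k := Fin.ext (ZMod.val_cast_of_lt k.isLt)
  right_inv x := ZMod.natCast_zmod_val x

@[simp]
lemma finEquivZMod_apply {n : ℕ} [NeZero n] (k : Fin n) : finEquivZMod n k = (k : ℕ) := rfl

lemma finEquivZMod_succ {m : ℕ} (i : Fin m) :
    finEquivZMod (m + 1) i.succ = finEquivZMod (m + 1) i.castSucc + 1 := by
  simp

variable {R : Type*} [CommRing R]

theorem det_eq_pow_mul_sum_row_zero_of_succ_rows {m : ℕ} (c : R)
    (B : Matrix (Fin (m + 1)) (Fin (m + 1)) R)
    (hB : ∀ i : Fin m, B i.succ = c • (Pi.single i.succ 1 - Pi.single i.castSucc 1)) :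
    B.det = c ^ m * ∑ j, B 0 j := by
  -- right multiplication by `U` replaces each column by the sum of it and all later ones
  let U : Matrix (Fin (m + 1)) (Fin (m + 1)) R := of fun k j => if j ≤ k then 1 else 0
  have hU : U.det = 1 := by
    rw [det_of_isLowerTriangular U fun k j hkj => if_neg (not_le.2 hkj)]
    simp [U]
  have hBU : ∀ i : Fin m, ∀ j, (B * U) i.succ j = c * (U i.succ j - U i.castSucc j) := by
    intro i j
    rw [mul_apply', hB, smul_dotProduct, sub_dotProduct, single_dotProduct, single_dotProduct,
      one_mul, one_mul, smul_eq_mul]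
  have hupper : (B * U).IsUpperTriangular := by
    intro k j hjk
    induction k using Fin.cases with
    | zero => exact absurd hjk (Fin.not_lt_zero j)
    | succ i =>
      have hj : j < i.succ := hjk
      rw [hBU]
      simp [U, Fin.le_castSucc_iff.2 hj, hj.le]
  have hdiag : ∀ i : Fin m, (B * U) i.succ i.succ = c := fun i => by
    simp [hBU, U]
  rw [← mul_one B.det, ← hU, ← det_mul, det_of_isUpperTriangular hupper, Fin.prod_univ_succ]
  simp [hdiag, mul_apply, U, mul_comm]

variable {n : ℕ} [NeZero n]

def subPredRows {n : ℕ} (A : Matrix (ZMod n) (ZMod n) R) : Matrix (ZMod n) (ZMod n) R :=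
  of fun x y => if x = 0 then A x y else A x y - A (x - 1) y

theorem det_subPredRows (A : Matrix (ZMod n) (ZMod n) R) : (subPredRows A).det = A.det := by
  obtain ⟨m, rfl⟩ : ∃ m, n = m + 1 := Nat.exists_eq_succ_of_ne_zero (NeZero.ne n)
  set e := finEquivZMod (m + 1)
  have he0 : e 0 = 0 := by simp [e]
  rw [← det_submatrix_equiv_self e, ← det_submatrix_equiv_self e A]
  refine (det_eq_of_forall_row_eq_smul_add_pred (fun _ => 1) (fun j => ?_) fun i j => ?_).symm
  · simp [subPredRows, he0]
  · have hne : e i.succ ≠ 0 := he0 ▸ e.injective.ne (Fin.succ_ne_zero i)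
    simp only [submatrix_apply, subPredRows, of_apply, if_neg hne]
    rw [finEquivZMod_succ, add_sub_cancel_right]
    ring

theorem det_eq_pow_mul_sum_row_zero_of_coprime {s : ℕ} (hs : s.Coprime n) (c : R)
    (B : Matrix (ZMod n) (ZMod n) R)
    (hB : ∀ x ≠ 0, B x = c • (Pi.single x 1 - Pi.single (x - s) 1)) :
    B.det = c ^ (n - 1) * ∑ y, B 0 y := by
  obtain ⟨m, rfl⟩ : ∃ m, n = m + 1 := Nat.exists_eq_succ_of_ne_zero (NeZero.ne n)
  let ψ := (finEquivZMod (m + 1)).trans (Units.mulLeft (ZMod.unitOfCoprime s hs))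
  have hψ : ∀ k, ψ k = s * finEquivZMod (m + 1) k := fun k => by
    simp [ψ, ZMod.coe_unitOfCoprime]
  have hψ0 : ψ 0 = 0 := by simp [hψ]
  rw [← det_submatrix_equiv_self ψ, det_eq_pow_mul_sum_row_zero_of_succ_rows c,
    Nat.add_sub_cancel, ← ψ.sum_comp]
  · simp [hψ0]
  · intro i
    have hne : ψ i.succ ≠ 0 := hψ0 ▸ ψ.injective.ne (Fin.succ_ne_zero i)
    have hpred : ψ i.succ - s = ψ i.castSucc := by rw [hψ, hψ, finEquivZMod_succ]; ring
    ext j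
    simp [hB _ hne, hpred, Pi.single_apply, ψ.injective.eq_iff]

theorem det_eq_zero_of_not_coprime {s : ℕ} (hs : ¬s.Coprime n) (c : R)
    (B : Matrix (ZMod n) (ZMod n) R)
    (hB : ∀ x ≠ 0, B x = c • (Pi.single x 1 - Pi.single (x - s) 1)) :
    B.det = 0 := by
  have : Nontrivial (ZMod (s.gcd n)) := ZMod.nontrivial_iff.2 hs
  let φ := ZMod.castHom (Nat.gcd_dvd_right s n) (ZMod (s.gcd n))
  let v : ZMod n → R := fun x => if φ x = 1 then 1 else 0
  have hv0 : v 0 = 0 := by simp [v]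
  have hφs : φ s = 0 := by
    rw [map_natCast, ZMod.natCast_eq_zero_iff]
    exact Nat.gcd_dvd_left s n
  have hvs : ∀ y, v (y + s) = v y := fun y => by simp only [v, map_add, hφs, add_zero]
  rw [← det_transpose]
  refine det_eq_zero_of_mulVec_eq_zero_of_mem_nonZeroDivisors (v := v) (i := 1) ?_
    (by simp [v])
  ext y
  calc (Bᵀ *ᵥ v) y
      = ∑ x, c * ((if y = x then v x else 0) - if y = x - s then v x else 0) := by
        rw [mulVec_transpose]
        refine sum_congr rfl fun x _ => ?_
        by_cases hx : x = 0
        · simp [hx, hv0]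
        · simp only [hB x hx, Pi.smul_apply, Pi.sub_apply, Pi.single_apply, smul_eq_mul]
          split_ifs <;> ring
    _ = c * (v y - v (y + s)) := by
        simp [← mul_sum, eq_sub_iff_add_eq]
    _ = 0 := by rw [hvs, sub_self, mul_zero]

def twoBlock {n : ℕ} (s : ℕ) (a b : R) (k : ZMod n) : R := if k.val < s then a else b

theorem twoBlock_sub_twoBlock_sub_one {s : ℕ} (hs : 0 < s) (hsn : s < n) (a b : R)
    (k : ZMod n) :
    twoBlock s a b k - twoBlock s a b (k - 1) =
      (a - b) * ((if k = 0 then 1 else 0) - if k = s then 1 else 0) := by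
  have : Nontrivial (ZMod n) := ZMod.nontrivial_iff.2 (by omega)
  have hval1 : (1 : ZMod n).val = 1 := ZMod.val_one'' (by omega)
  have hks : k = s ↔ k.val = s :=
    ⟨fun h => h ▸ ZMod.val_cast_of_lt hsn, fun h => h ▸ (ZMod.natCast_zmod_val k).symm⟩
  rcases eq_or_ne k 0 with rfl | hk
  · have hval : (0 - 1 : ZMod n).val = n - 1 := by
      rw [zero_sub, ZMod.neg_val, if_neg one_ne_zero, hval1]
    simp only [twoBlock, hval, hks, ZMod.val_zero]
    split_ifs <;> first | (exfalso; omega) | ring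
  · have hk' : k.val ≠ 0 := (ZMod.val_ne_zero k).2 hk
    have hval : (k - 1).val = k.val - 1 := by
      rw [ZMod.val_sub (by omega), hval1]
    simp only [twoBlock, hval, hk, if_false, hks]
    split_ifs <;> first | (exfalso; omega) | ring

theorem sum_twoBlock {s t : ℕ} (hst : s + t = n) (a b : R) :
    ∑ k : ZMod n, twoBlock s a b k = s * a + t * b := by
  rw [← (finEquivZMod n).sum_comp]
  simp only [twoBlock, finEquivZMod_apply, ZMod.val_cast_of_lt (Fin.is_lt _)]
  rw [Fin.sum_univ_eq_sum_range (fun i => if i < s then a else b)]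
  subst hst
  simp +contextual [sum_range_add, sum_ite_of_true]

theorem subPredRows_circulant_twoBlock {s : ℕ} (hs : 0 < s) (hsn : s < n) (a b : R) {x : ZMod n}
    (hx : x ≠ 0) :
    subPredRows (circulant (twoBlock s a b)) x =
      (a - b) • (Pi.single x 1 - Pi.single (x - s) 1) := by
  ext y
  have h0 : x - y = 0 ↔ y = x := sub_eq_zero.trans eq_comm
  have hxs : x - y = s ↔ y = x - s := by
    rw [sub_eq_iff_eq_add, eq_sub_iff_add_eq, add_comm, eq_comm]
  simp only [subPredRows, of_apply, if_neg hx, circulant_apply, sub_right_comm x 1 y,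
    twoBlock_sub_twoBlock_sub_one hs hsn, h0, hxs, Pi.smul_apply, Pi.sub_apply, Pi.single_apply,
    smul_eq_mul]

theorem det_circulant_two_blocks_general (n s t : ℕ) [NeZero n] (hs : 0 < s) (ht : 0 < t)
    (hst : s + t = n) (a b : ℚ) :
    (Matrix.of fun i j : ZMod n => if (j - i).val < s then a else b).det =
      if Nat.gcd s n = 1 then ((s : ℚ) * a + (t : ℚ) * b) * (a - b) ^ (n - 1)
      else 0 := by
  have hsn : s < n := by omega
  have hrows : ∀ x : ZMod n, x ≠ 0 → subPredRows (circulant (twoBlock s a b)) x =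
      (a - b) • (Pi.single x 1 - Pi.single (x - s) 1) :=
    fun x hx => subPredRows_circulant_twoBlock hs hsn a b hx
  rw [show (of fun i j : ZMod n => if (j - i).val < s then a else b) =
    (circulant (twoBlock s a b))ᵀ from rfl, det_transpose, ← det_subPredRows]
  split_ifs with hcop
  · rw [det_eq_pow_mul_sum_row_zero_of_coprime hcop (a - b) _ hrows]
    simp only [subPredRows, of_apply, if_true, circulant_apply]
    rw [Fintype.sum_equiv (Equiv.subLeft 0) (fun y => twoBlock s a b (0 - y)) _ fun _ => rfl,
      sum_twoBlock hst]
    ring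
  · exact det_eq_zero_of_not_coprime hcop (a - b) _ hrows

/-- Determinant of the circulant matrix whose first row is `s` copies of `a`
followed by `t` copies of `b` (`s + t = n`, `a ≠ b`). -/
theorem det_circulant_two_blocks (n s t : ℕ) [NeZero n] (hs : 0 < s) (ht : 0 < t)
    (hst : s + t = n) (a b : ℚ) (hab : a ≠ b) :
    (Matrix.of fun i j : ZMod n => if (j - i).val < s then a else b).det =
      if Nat.gcd s n = 1 then ((s : ℚ) * a + (t : ℚ) * b) * (a - b) ^ (n - 1)
      else 0 :=
  det_circulant_two_blocks_general n s t hs ht hst a b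
end

section
/- The k-element circulant digraph on n vertices (the circulant matrix with first row consisting of k ones followed by n − k zeros) is non-singular if and only if gcd(n, k) = 1. -/
/-!
The circulant matrix acts on `v : ZMod n → K` by taking the window sums
`i ↦ v i + v (i + 1) + ⋯ + v (i + k - 1)`. Subtracting consecutive window sums shows that a
vector in the kernel is `k`-periodic; if `gcd(n, k) = 1` it is therefore constant, and a constant
with vanishing window sums is zero. Conversely, if `d = gcd(n, k) > 1`, the indicator `f` of the
multiples of `d` is `k`-periodic, so the window sums of `j ↦ f j - f (j + 1)` telescope to zero.
-/

open Finset Function Matrix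

section WindowSums

variable {G M : Type*} [AddCommMonoidWithOne G] [AddCommGroup M]

theorem periodic_of_forall_sum_range_eq_zero {v : G → M} {k : ℕ}
    (hv : ∀ i, ∑ t ∈ range k, v (i + t) = 0) : Periodic v k := by
  intro i
  have hshift : ∀ t : ℕ, i + ((t + 1 : ℕ) : G) = i + 1 + t := fun t => by
    rw [Nat.cast_succ, add_comm (t : G), add_assoc]
  calc v (i + k) = ∑ t ∈ range (k + 1), v (i + t) := by rw [sum_range_succ, hv, zero_add]
    _ = v i := by rw [sum_range_succ']; simp only [hshift, hv, Nat.cast_zero, add_zero, zero_add]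

theorem sum_range_sub_add_one_eq_zero_of_periodic {f : G → M} {k : ℕ} (hf : Periodic f k)
    (i : G) : ∑ t ∈ range k, (f (i + t) - f (i + t + 1)) = 0 := by
  have htelescope := sum_range_sub' (fun t : ℕ => f (i + t)) k
  simp only [Nat.cast_succ, ← add_assoc] at htelescope
  rw [htelescope, Nat.cast_zero, add_zero, hf, sub_self]

end WindowSums

section ZModWindowSums

variable {n k : ℕ}

theorem ZMod.eq_apply_zero_of_periodic_of_coprime [NeZero n] {α : Type*} {v : ZMod n → α}
    (hv : Periodic v k) (hk : k.Coprime n) (j : ZMod n) : v j = v 0 :=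
  calc v j = v ((j * (k : ZMod n)⁻¹).val * k) := by
        rw [ZMod.natCast_zmod_val, mul_assoc, mul_comm _ (k : ZMod n),
          ZMod.coe_mul_inv_eq_one k hk, mul_one]
    _ = v 0 := hv.nat_mul_eq _

theorem eq_zero_of_forall_sum_range_eq_zero [NeZero n] {M : Type*} [AddCommGroup M]
    [IsAddTorsionFree M] (hk : k ≠ 0) (hnk : n.gcd k = 1) {v : ZMod n → M}
    (hv : ∀ i, ∑ t ∈ range k, v (i + t) = 0) : v = 0 := by
  have hconst := ZMod.eq_apply_zero_of_periodic_of_coprime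
    (periodic_of_forall_sum_range_eq_zero hv) (Nat.coprime_comm.mp hnk)
  have hkv : k • v 0 = 0 := by simpa [hconst] using hv 0
  funext j
  rw [hconst, Pi.zero_apply]
  exact (nsmul_eq_zero_iff_right hk).mp hkv

theorem exists_ne_zero_forall_sum_range_eq_zero {R : Type*} [Ring R] [Nontrivial R] {d : ℕ}
    (hdn : d ∣ n) (hdk : d ∣ k) (hd : d ≠ 1) :
    ∃ v : ZMod n → R, v ≠ 0 ∧ ∀ i, ∑ t ∈ range k, v (i + t) = 0 := by
  have : Nontrivial (ZMod d) := ZMod.nontrivial_iff.mpr hd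
  let φ := ZMod.castHom hdn (ZMod d)
  have hφk : φ k = 0 := by rw [map_natCast, ZMod.natCast_eq_zero_iff]; exact hdk
  let f : ZMod n → R := fun j => if φ j = 0 then 1 else 0
  have hf : Periodic f k := fun j => by simp only [f, map_add, hφk, add_zero]
  refine ⟨fun j => f j - f (j + 1), fun h => ?_, sum_range_sub_add_one_eq_zero_of_periodic hf⟩
  simpa only [f, zero_add, map_zero, map_one, one_ne_zero, if_true, if_false, sub_zero,
    Pi.zero_apply] using congrFun h 0

end ZModWindowSums

section Circulant

variable {R : Type*} {n k : ℕ}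

def kElementCirculant (R : Type*) [Zero R] [One R] (n k : ℕ) : Matrix (ZMod n) (ZMod n) R :=
  Matrix.of fun i j => if (j - i).val < k then 1 else 0

theorem kElementCirculant_mulVec_apply [Semiring R] [NeZero n] (hkn : k ≤ n)
    (v : ZMod n → R) (i : ZMod n) :
    (kElementCirculant R n k *ᵥ v) i = ∑ t ∈ range k, v (i + t) := by
  have hval : ∀ t ∈ range k, (t : ZMod n).val = t := fun t ht =>
    ZMod.val_natCast_of_lt ((mem_range.mp ht).trans_le hkn)
  calc (kElementCirculant R n k *ᵥ v) i
        = ∑ x : ZMod n, if x.val < k then v (i + x) else 0 := by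
        simp only [mulVec, dotProduct, kElementCirculant, of_apply, ite_mul, one_mul, zero_mul]
        exact (Fintype.sum_equiv (Equiv.addLeft i) _ _ fun x => by simp).symm
    _ = ∑ x ∈ univ.filter (·.val < k), v (i + x) := (sum_filter _ _).symm
    _ = ∑ t ∈ range k, v (i + t) :=
        sum_nbij' ZMod.val Nat.cast (fun x hx => mem_range.mpr (mem_filter.mp hx).2)
          (fun t ht => by simp [hval t ht, mem_range.mp ht]) (fun x _ => ZMod.natCast_zmod_val x)
          hval (fun x _ => by rw [ZMod.natCast_zmod_val])

theorem kElementCirculant_det_ne_zero_iff {K : Type*} [Field K] [CharZero K] [NeZero n]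
    (hk : k ≠ 0) (hkn : k ≤ n) : (kElementCirculant K n k).det ≠ 0 ↔ n.gcd k = 1 := by
  have hker (v : ZMod n → K) :
      kElementCirculant K n k *ᵥ v = 0 ↔ ∀ i, ∑ t ∈ range k, v (i + t) = 0 := by
    simp only [funext_iff, kElementCirculant_mulVec_apply hkn, Pi.zero_apply]
  rw [Ne, ← exists_mulVec_eq_zero_iff]
  simp only [hker]
  constructor
  · intro hnoker
    by_contra hgcd
    exact hnoker <|
      exists_ne_zero_forall_sum_range_eq_zero (n.gcd_dvd_left k) (n.gcd_dvd_right k) hgcd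
  · rintro hgcd ⟨v, hv0, hv⟩
    exact hv0 (eq_zero_of_forall_sum_range_eq_zero hk hgcd hv)

end Circulant

/-- The `k`-element circulant digraph on `n` vertices (circulant matrix whose
first row is `k` ones followed by `n - k` zeros) is non-singular iff
`gcd(n,k) = 1`. -/
theorem k_element_circulant_nonsingular_iff (n k : ℕ) [NeZero n]
    (hk : 1 ≤ k) (hkn : k ≤ n) :
    (Matrix.of fun i j : ZMod n => if (j - i).val < k then (1 : ℚ) else 0).det ≠ 0 ↔
      Nat.gcd n k = 1 :=
  kElementCirculant_det_ne_zero_iff (Nat.one_le_iff_ne_zero.mp hk) hkn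
end

section
/- Let p be a prime and k a positive integer with p ∤ k. Then any k-regular circulant graph or digraph on p^ℓ vertices (ℓ ≥ 1) has non-singular adjacency matrix. -/
/-!
Reduce modulo `p`. Circulant matrices over `𝔽_p` indexed by a finite abelian group `G` are the
image of the group algebra `𝔽_p[G]` under its regular representation. If `|G| = p ^ n`, the
Frobenius endomorphism of the commutative ring `𝔽_p[G]` sends `f = ∑ f_g g` to
`∑ f_g ^ (p ^ n) (p ^ n • g) = (∑ f_g) • 1`, so `f` is a unit as soon as its coefficient sum is
nonzero. For a `0`-`1` circulant with row sum `k` and `p ∤ k`, the integer determinant is therefore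
nonzero modulo `p`.
-/

open Matrix AddMonoidAlgebra

namespace AddMonoidAlgebra

noncomputable def circulantRingHom {R G : Type*} [Semiring R] [AddGroup G] [Fintype G]
    [DecidableEq G] : R[G] →+* Matrix G G R where
  toFun f := circulant f.coeff
  map_zero' := circulant_zero R G
  map_add' f g := circulant_add f.coeff g.coeff
  map_one' := by simp [one_def, Finsupp.single_eq_pi_single]
  map_mul' f g := by
    rw [circulant_mul]
    congr 1
    ext x
    simp [coeff_mul_apply_right, Finsupp.sum_fintype, mulVec, dotProduct, sub_eq_add_neg]

end AddMonoidAlgebra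

section PrimePowerOrder

variable {p n : ℕ} [Fact p.Prime] {G : Type*} [AddCommGroup G] [Fintype G]

theorem AddMonoidAlgebra.pow_char_pow_eq_single_sum_coeff (hG : Nat.card G = p ^ n)
    (f : (ZMod p)[G]) : f ^ p ^ n = single 0 (∑ g, f.coeff g) := by
  have : CharP (ZMod p)[G] p := charP_of_injective_algebraMap' (ZMod p) p
  have hf : f = ∑ g, single g (f.coeff g) := by
    ext x
    simp [coeff_single]
  conv_lhs => rw [hf]
  rw [sum_pow_char_pow, ← singleAddHom_apply, map_sum]
  refine Finset.sum_congr rfl fun g _ => ?_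
  rw [single_pow, ZMod.pow_card_pow, ← hG, card_nsmul_eq_zero']
  rfl

theorem AddMonoidAlgebra.isUnit_of_sum_coeff_ne_zero (hG : Nat.card G = p ^ n)
    {f : (ZMod p)[G]} (hf : ∑ g, f.coeff g ≠ 0) : IsUnit f := by
  rw [← isUnit_pow_iff (pow_ne_zero n (Fact.out : p.Prime).ne_zero),
    pow_char_pow_eq_single_sum_coeff hG]
  exact hf.isUnit.map singleZeroRingHom

variable [DecidableEq G]

theorem Matrix.isUnit_circulant_of_sum_ne_zero (hG : Nat.card G = p ^ n) {v : G → ZMod p}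
    (hv : ∑ g, v g ≠ 0) : IsUnit (circulant v) :=
  (isUnit_of_sum_coeff_ne_zero (f := ofCoeff (Finsupp.equivFunOnFinite.symm v)) hG hv).map
    circulantRingHom

theorem Matrix.det_circulant_ne_zero_of_not_dvd_sum (hG : Nat.card G = p ^ n) {v : G → ℤ}
    (hv : ¬ (p : ℤ) ∣ ∑ g, v g) : (circulant v).det ≠ 0 := by
  have hunit : IsUnit (circulant fun g => (v g : ZMod p)) := by
    refine isUnit_circulant_of_sum_ne_zero hG ?_
    rwa [← Int.cast_sum, Ne, ZMod.intCast_zmod_eq_zero_iff_dvd]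
  intro h
  have h' := congrArg (Int.castRingHom (ZMod p)) h
  rw [RingHom.map_det, RingHom.mapMatrix_apply, map_circulant, map_zero] at h'
  exact ((isUnit_iff_isUnit_det _).mp hunit).ne_zero h'

end PrimePowerOrder

theorem circulant_prime_power_nonsingular_general (p ℓ k : ℕ) (hp : p.Prime)
    (hpk : ¬ p ∣ k) [NeZero (p ^ ℓ)]
    (a : ZMod (p ^ ℓ) → ℚ) (h01 : ∀ u, a u = 0 ∨ a u = 1)
    (hreg : (∑ u : ZMod (p ^ ℓ), a u) = (k : ℚ)) :
    (Matrix.of fun i j : ZMod (p ^ ℓ) => a (j - i)).det ≠ 0 := by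
  have : Fact p.Prime := ⟨hp⟩
  obtain ⟨c, rfl⟩ : ∃ c : ZMod (p ^ ℓ) → ℤ, a = fun u => (c u : ℚ) :=
    ⟨fun u => if a u = 0 then 0 else 1, funext fun u => by rcases h01 u with h | h <;> simp [h]⟩
  have hsum : ∑ u, c u = k := by
    beta_reduce at hreg
    exact_mod_cast hreg
  have hdet : (circulant c).det ≠ 0 :=
    det_circulant_ne_zero_of_not_dvd_sum (Nat.card_zmod _) (by rwa [hsum, Int.natCast_dvd_natCast])
  have hmat : (Matrix.of fun i j => (c (j - i) : ℚ))
      = ((Int.castRingHom ℚ).mapMatrix (circulant c))ᵀ := rfl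
  rw [hmat, det_transpose, ← RingHom.map_det, eq_intCast]
  exact Int.cast_ne_zero.mpr hdet

/-- A `k`-regular circulant graph/digraph on `p^ℓ` vertices, where `p` is a
prime not dividing `k`, is non-singular. -/
theorem circulant_prime_power_nonsingular (p ℓ k : ℕ) (hp : p.Prime)
    (hℓ : 0 < ℓ) (hk : 0 < k) (hpk : ¬ p ∣ k) [NeZero (p ^ ℓ)]
    (a : ZMod (p ^ ℓ) → ℚ) (h01 : ∀ u, a u = 0 ∨ a u = 1)
    (hreg : (∑ u : ZMod (p ^ ℓ), a u) = (k : ℚ)) :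
    (Matrix.of fun i j : ZMod (p ^ ℓ) => a (j - i)).det ≠ 0 :=
  circulant_prime_power_nonsingular_general p ℓ k hp hpk a h01 hreg
end

section
/- Fix n ≥ 3 and 1 ≤ i ≤ τ where τ = ⌊n/2⌋. The distance-i graph C_n^i of the n-cycle (the circulant graph whose adjacency matrix A_i has (r,s)-entry 1 exactly when the cycle-distance between vertices r and s is i) has singular adjacency matrix if and only if 4 divides n and gcd(i, n/2) divides n/4. -/
/-!
The matrix is the circulant matrix of the indicator of `{i, -i} ⊆ ℤ/n`, so the discrete Fourier
transform diagonalises it, with eigenvalues `ψ(-ik) + ψ(ik)` (`k ∈ ℤ/n`, `ψ` the standard additive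
character). Such an eigenvalue vanishes iff `ψ(2ik) = -1`, i.e. iff `2ik` is the element of order two
of `ℤ/n`, which exists only for even `n` and is `n/2`. The congruence `2i·k ≡ n/2 (mod n)` is
solvable iff `gcd(2i, n) ∣ n/2`, and for even `n` this unwinds to `4 ∣ n ∧ gcd(i, n/2) ∣ n/4`.
-/

open Matrix ZMod

theorem AddChar.map_neg_add_map_eq_zero_iff {G R : Type*} [AddGroup G] [CommRing R]
    (ψ : AddChar G R) (x : G) : ψ (-x) + ψ x = 0 ↔ ψ (x + x) = -1 := by
  rw [← (ψ.val_isUnit x).mul_right_eq_zero, mul_add, ← map_add_eq_mul, ← map_add_eq_mul,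
    add_neg_cancel, map_zero_eq_one, add_eq_zero_iff_eq_neg']

theorem AddChar.eq_neg_one_iff {G R : Type*} [AddMonoid G] [CommRing R] [NoZeroDivisors R]
    [NeZero (2 : R)] {ψ : AddChar G R} (hψ : Function.Injective ψ) (x : G) :
    ψ x = -1 ↔ x + x = 0 ∧ x ≠ 0 := by
  rw [← hψ.eq_iff, ← hψ.ne_iff, map_add_eq_mul, map_zero_eq_one, mul_self_eq_one_iff]
  constructor
  · intro h
    exact ⟨Or.inr h, fun h1 => (two_ne_zero : (2 : R) ≠ 0) (by linear_combination h - h1)⟩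
  · rintro ⟨h | h, hne⟩
    · exact absurd h hne
    · exact h

theorem Nat.two_dvd_and_gcd_two_mul_dvd_half_iff (n i : ℕ) :
    2 ∣ n ∧ Nat.gcd (2 * i) n ∣ n / 2 ↔ 4 ∣ n ∧ Nat.gcd i (n / 2) ∣ n / 4 := by
  constructor
  · rintro ⟨⟨m, rfl⟩, h⟩
    rw [Nat.gcd_mul_left, Nat.mul_div_cancel_left m two_pos] at h
    obtain ⟨m', rfl⟩ := dvd_trans (dvd_mul_right 2 _) h
    refine ⟨⟨m', by ring⟩, ?_⟩
    rw [Nat.mul_div_cancel_left _ two_pos, show 2 * (2 * m') / 4 = m' by omega]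
    exact (Nat.mul_dvd_mul_iff_left two_pos).mp h
  · rintro ⟨⟨m, rfl⟩, h⟩
    rw [show 4 * m / 2 = 2 * m by omega, show 4 * m / 4 = m by omega] at h
    refine ⟨⟨2 * m, by ring⟩, ?_⟩
    rw [show 4 * m = 2 * (2 * m) by ring, Nat.gcd_mul_left, Nat.mul_div_cancel_left _ two_pos]
    exact mul_dvd_mul_left 2 h

namespace ZMod

theorem exists_mul_eq_iff_gcd_dvd (n a b : ℕ) :
    (∃ k : ZMod n, (a : ZMod n) * k = b) ↔ Nat.gcd a n ∣ b := by
  rw [← Int.gcd_natCast_natCast, Int.gcd_dvd_iff]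
  constructor
  · rintro ⟨k, hk⟩
    obtain ⟨x, rfl⟩ := intCast_surjective k
    obtain ⟨y, hy⟩ := (intCast_eq_intCast_iff_dvd_sub (a * x) b n).mp (by push_cast; exact hk)
    exact ⟨x, y, by linear_combination hy⟩
  · rintro ⟨x, y, hxy⟩
    refine ⟨x, ?_⟩
    have : ((b : ℤ) : ZMod n) = ((a * x + n * y : ℤ) : ZMod n) := congrArg _ hxy
    push_cast at this
    rw [this, natCast_self, zero_mul, add_zero]

variable {N : ℕ} [NeZero N]

theorem add_self_eq_zero_and_ne_zero_iff (y : ZMod N) :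
    y + y = 0 ∧ y ≠ 0 ↔ 2 ∣ N ∧ y = ((N / 2 : ℕ) : ZMod N) := by
  have hval : y + y = ((2 * y.val : ℕ) : ZMod N) := by push_cast [natCast_zmod_val]; ring
  rw [hval, natCast_eq_zero_iff, Ne, ← val_eq_zero]
  have hlt := val_lt y
  constructor
  · rintro ⟨⟨c, hc⟩, hy⟩
    obtain rfl : c = 1 := by
      rcases c with _ | _ | c <;> [omega; rfl; nlinarith]
    refine ⟨⟨y.val, by omega⟩, ?_⟩
    rw [← natCast_zmod_val y]
    congr 1
    omega
  · rintro ⟨⟨m, rfl⟩, rfl⟩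
    have hm : m ≠ 0 := by have := NeZero.ne (2 * m); omega
    rw [val_natCast_of_lt (by omega), Nat.mul_div_cancel_left m two_pos]
    exact ⟨dvd_rfl, hm⟩

theorem min_val_sub_val_eq_iff {i : ℕ} (hi : i ≤ N / 2) (t : ZMod N) :
    min t.val (N - t.val) = i ↔ t = i ∨ t = -i := by
  have hlt := t.val_lt
  rw [← neg_eq_iff_eq_neg, ← (val_injective N).eq_iff, ← (val_injective N).eq_iff (a := -t),
    val_natCast_of_lt (by omega), neg_val]
  split_ifs with h0
  · simp [h0]
  · have := (val_eq_zero t).not.mpr h0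
    omega

theorem dft_circulant_mulVec (v x : ZMod N → ℂ) :
    𝓕 (circulant v *ᵥ x) = 𝓕 v * 𝓕 x := by
  ext k
  simp only [dft_apply, Pi.mul_apply, mulVec, dotProduct, circulant_apply, smul_eq_mul,
    Finset.mul_sum, Finset.sum_mul]
  rw [Finset.sum_comm]
  refine Finset.sum_congr rfl fun s _ => ?_
  rw [← Equiv.sum_comp (Equiv.addRight s)]
  refine Finset.sum_congr rfl fun t _ => ?_
  simp only [Equiv.coe_addRight, add_sub_cancel_right, add_mul, neg_add, AddChar.map_add_eq_mul]
  ring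

theorem det_circulant (v : ZMod N → ℂ) : (circulant v).det = ∏ k, 𝓕 v k := by
  let F : (ZMod N → ℂ) ≃ₗ[ℂ] (ZMod N → ℂ) := dft
  calc (circulant v).det = LinearMap.det (toLin' (circulant v)) := (LinearMap.det_toLin' _).symm
    _ = LinearMap.det (F.symm.toLinearMap ∘ₗ toLin' (diagonal (𝓕 v)) ∘ₗ
        F.symm.symm.toLinearMap) := by
      congr 1
      refine LinearMap.ext fun x => ?_
      simp only [LinearMap.comp_apply, LinearEquiv.coe_coe, LinearEquiv.symm_symm, toLin'_apply,
        LinearEquiv.eq_symm_apply, F, dft_circulant_mulVec]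
      exact funext fun k => (mulVec_diagonal _ _ k).symm
    _ = ∏ k, 𝓕 v k := by rw [LinearMap.det_conj, LinearMap.det_toLin', det_diagonal]

theorem dft_indicator_pair_eq_zero_iff (a k : ZMod N) :
    𝓕 (fun t => if t = a ∨ t = -a then (1 : ℂ) else 0) k = 0 ↔
      stdAddChar (a * k + a * k) = -1 := by
  rw [dft_apply]
  by_cases h : a = -a
  · have h2a : a * k + a * k = 0 := by rw [← add_mul, ← sub_neg_eq_add, ← h, sub_self, zero_mul]
    simp only [← h, or_self, smul_eq_mul, mul_ite, mul_one, mul_zero, Finset.sum_ite_eq',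
      Finset.mem_univ, if_true, h2a, AddChar.map_zero_eq_one]
    exact iff_of_false ((stdAddChar : AddChar (ZMod N) ℂ).val_isUnit _).ne_zero (by norm_num)
  · have hsplit : ∀ t : ZMod N, (if t = a ∨ t = -a then (1 : ℂ) else 0) =
        (if t = a then 1 else 0) + (if t = -a then 1 else 0) := by
      intro t
      by_cases ha : t = a
      · simp [ha, h]
      · simp [ha]
    simp only [hsplit, smul_eq_mul, mul_add, Finset.sum_add_distrib, mul_ite, mul_one, mul_zero,
      Finset.sum_ite_eq', Finset.mem_univ, if_true, neg_mul, neg_neg]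
    exact AddChar.map_neg_add_map_eq_zero_iff _ _

end ZMod

theorem distance_graph_cycle_singular_iff_general (n i : ℕ) [NeZero n]
    (hin : i ≤ n / 2) :
    (Matrix.of fun r s : ZMod n =>
        if min (r - s).val (n - (r - s).val) = i then (1 : ℚ) else 0).det = 0 ↔
      (4 ∣ n ∧ Nat.gcd i (n / 2) ∣ n / 4) := by
  set A := Matrix.of fun r s : ZMod n =>
    if min (r - s).val (n - (r - s).val) = i then (1 : ℚ) else 0
  set v : ZMod n → ℂ := fun t => if t = i ∨ t = -i then 1 else 0
  have hA : (algebraMap ℚ ℂ).mapMatrix A = circulant v := by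
    ext r s
    simp only [A, v, RingHom.mapMatrix_apply, map_apply, of_apply, circulant_apply,
      min_val_sub_val_eq_iff hin, apply_ite (algebraMap ℚ ℂ), map_one, map_zero]
  calc A.det = 0 ↔ (circulant v).det = 0 := by
        rw [← hA, ← RingHom.map_det, map_eq_zero_iff _ (algebraMap ℚ ℂ).injective]
    _ ↔ ∃ k : ZMod n, stdAddChar ((i : ZMod n) * k + (i : ZMod n) * k) = -1 := by
        simp only [det_circulant, Finset.prod_eq_zero_iff, Finset.mem_univ, true_and, v,
          dft_indicator_pair_eq_zero_iff]
    _ ↔ 2 ∣ n ∧ ∃ k : ZMod n, ((2 * i : ℕ) : ZMod n) * k = (n / 2 : ℕ) := by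
        simp only [AddChar.eq_neg_one_iff injective_stdAddChar, add_self_eq_zero_and_ne_zero_iff,
          exists_and_left, two_mul, Nat.cast_add, add_mul]
    _ ↔ 4 ∣ n ∧ Nat.gcd i (n / 2) ∣ n / 4 := by
        rw [exists_mul_eq_iff_gcd_dvd, Nat.two_dvd_and_gcd_two_mul_dvd_half_iff]

/-- The distance-`i` graph `C_n^i` of the `n`-cycle is singular iff `4 ∣ n`
and `gcd(i, n/2) ∣ n/4`. -/
theorem distance_graph_cycle_singular_iff (n i : ℕ) [NeZero n]
    (hn : 3 ≤ n) (hi : 1 ≤ i) (hin : i ≤ n / 2) :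
    (Matrix.of fun r s : ZMod n =>
        if min (r - s).val (n - (r - s).val) = i then (1 : ℚ) else 0).det = 0 ↔
      (4 ∣ n ∧ Nat.gcd i (n / 2) ∣ n / 4) :=
  distance_graph_cycle_singular_iff_general n i hin
end

section
/- Let n ≥ 4 be even and τ = n/2. Then the complement graph (C_n^τ)^c is singular. If n is odd, (C_n^τ)^c is singular if and only if n ≡ 3 (mod 6). -/
/-!
The matrix is the circulant `J - I - A`, where `A` is the adjacency matrix of `C_n^τ`, so it is
diagonalised by the characters `d ↦ ψ (d * j)` of `ZMod n`. Since the jumps of `C_n^τ` are `±τ`,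
its eigenvalues are `n [j = 0] - 1 - ψ (τ j) - ψ (-τ j)`, with a single `ψ (τ j)` term when `n` is
even (then `τ = -τ`). For even `n`, `ψ τ = -1` makes the eigenvalue at `j = 1` vanish. For odd `n`,
`τ` is a unit (`2τ = -1`), and `z + z⁻¹ = -1` says exactly that `z` is a primitive cube root of
unity, so some eigenvalue vanishes iff `ZMod n` has an element of order `3`, i.e. iff `3 ∣ n`.
-/

open Matrix

namespace AddChar

section Circulant

variable {R K : Type*} [CommRing R] [Fintype R] [DecidableEq R] [CommRing K]

def charMatrix (ψ : AddChar R K) : Matrix R R K := of fun i j => ψ (i * j)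

variable {ψ : AddChar R K}

lemma circulant_mul_charMatrix_inv (c : R → K) :
    circulant c * charMatrix ψ⁻¹ = charMatrix ψ⁻¹ * diagonal fun j => ∑ d, c d * ψ (d * j) := by
  refine Matrix.ext fun i j => ?_
  rw [Matrix.mul_apply, mul_diagonal, charMatrix, of_apply, Finset.mul_sum]
  refine Fintype.sum_equiv (Equiv.subLeft i) _ _ fun k => ?_
  rw [Equiv.subLeft_apply, circulant_apply, of_apply, inv_apply, inv_apply, mul_left_comm,
    ← map_add_eq_mul]
  ring_nf

variable [IsDomain K]

lemma IsPrimitive.charMatrix_inv_mul_charMatrix (hψ : ψ.IsPrimitive) :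
    charMatrix ψ⁻¹ * charMatrix ψ = (Fintype.card R : K) • 1 := by
  refine Matrix.ext fun i l => ?_
  have h : ∀ k, -(i * k) + k * l = k * (l - i) := fun k => by ring
  simp only [charMatrix, Matrix.mul_apply, of_apply, inv_apply, ← map_add_eq_mul, h,
    sum_mulShift _ hψ, sub_eq_zero, Matrix.smul_apply, Matrix.one_apply, smul_eq_mul, mul_ite,
    mul_one, mul_zero, eq_comm (a := l), Nat.cast_ite, Nat.cast_zero]

lemma IsPrimitive.det_circulant (hψ : ψ.IsPrimitive) (hR : (Fintype.card R : K) ≠ 0)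
    (c : R → K) : (circulant c).det = ∏ j, ∑ d, c d * ψ (d * j) := by
  have hW : (charMatrix ψ⁻¹).det ≠ 0 := by
    have h := congrArg det hψ.charMatrix_inv_mul_charMatrix
    rw [det_mul, det_smul, det_one, mul_one] at h
    exact left_ne_zero_of_mul (h ▸ pow_ne_zero _ hR)
  have h := congrArg det (circulant_mul_charMatrix_inv (ψ := ψ) c)
  rw [det_mul, det_mul, det_diagonal, mul_comm] at h
  exact mul_left_cancel₀ hW h

lemma IsPrimitive.sum_ite_ne_zero_and_notMem_mul (hψ : ψ.IsPrimitive) {S : Finset R}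
    (hS : 0 ∉ S) (j : R) :
    ∑ d, (if d ≠ 0 ∧ d ∉ S then (1 : K) else 0) * ψ (d * j) =
      (if j = 0 then (Fintype.card R : K) else 0) - 1 - ∑ d ∈ S, ψ (d * j) := by
  have h : ∀ d : R, (if d ≠ 0 ∧ d ∉ S then (1 : K) else 0) =
      1 - (if d = 0 then 1 else 0) - (if d ∈ S then 1 else 0) := by
    intro d
    by_cases h0 : d = 0
    · simp [h0, hS]
    · by_cases hd : d ∈ S <;> simp [h0, hd]
  simp only [h, sub_mul, one_mul, ite_mul, zero_mul, Finset.sum_sub_distrib, sum_mulShift _ hψ,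
    Finset.sum_ite_eq', Finset.mem_univ, if_true, Finset.sum_ite_mem, Finset.univ_inter,
    map_zero_eq_one, Nat.cast_ite, Nat.cast_zero]

end Circulant

variable {G K : Type*} [AddGroup G] [CommRing K] [IsDomain K] {ψ : AddChar G K}

lemma eq_neg_one_of_two_nsmul_eq_zero (hψ : Function.Injective ψ) {a : G} (ha : a ≠ 0)
    (h2 : 2 • a = 0) : ψ a = -1 := by
  have hsq : ψ a ^ 2 = 1 := by rw [← map_nsmul_eq_pow, h2, map_zero_eq_one]
  have hne : ψ a ≠ 1 := by rwa [← map_zero_eq_one ψ, hψ.ne_iff]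
  exact (sq_eq_one_iff.mp hsq).resolve_left hne

lemma add_map_neg_eq_neg_one_iff (hψ : Function.Injective ψ) (h3 : (3 : K) ≠ 0) (a : G) :
    ψ a + ψ (-a) = -1 ↔ a ≠ 0 ∧ 3 • a = 0 := by
  set z := ψ a
  set w := ψ (-a)
  have hzw : z * w = 1 := by rw [← map_add_eq_mul, add_neg_cancel, map_zero_eq_one]
  have hz1 : z = 1 ↔ a = 0 := by rw [← map_zero_eq_one ψ, hψ.eq_iff]
  have hz3 : z ^ 3 = 1 ↔ 3 • a = 0 := by
    rw [← map_nsmul_eq_pow, ← map_zero_eq_one ψ, hψ.eq_iff]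
  rw [ne_eq, ← hz1, ← hz3]
  constructor
  · intro h
    have hcyc : z ^ 2 + z + 1 = 0 := by linear_combination z * h - hzw
    refine ⟨fun hz => h3 ?_, by linear_combination (z - 1) * hcyc⟩
    rw [hz] at hcyc
    linear_combination hcyc
  · rintro ⟨hne, hcube⟩
    have hcyc : z ^ 2 + z + 1 = 0 := by
      have : (z - 1) * (z ^ 2 + z + 1) = 0 := by linear_combination hcube
      exact (mul_eq_zero.mp this).resolve_left (sub_ne_zero.mpr hne)
    linear_combination w * hcyc - (z + 1) * hzw

end AddChar

namespace ZMod

variable {n : ℕ}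

lemma natCast_div_two_ne_zero (hn : 2 ≤ n) : ((n / 2 : ℕ) : ZMod n) ≠ 0 := by
  rw [Ne, ← ZMod.val_eq_zero, ZMod.val_cast_of_lt (by omega)]
  omega

variable [NeZero n]

lemma exists_ne_zero_nsmul_eq_zero_iff {p : ℕ} [hp : Fact p.Prime] :
    (∃ a : ZMod n, a ≠ 0 ∧ p • a = 0) ↔ p ∣ n := by
  constructor
  · rintro ⟨a, ha, hpa⟩
    have := addOrderOf_dvd_card (x := a)
    rwa [addOrderOf_eq_prime hpa ha, ZMod.card] at this
  · intro h
    obtain ⟨a, ha⟩ := exists_prime_addOrderOf_dvd_card (G := ZMod n) p (by rwa [ZMod.card])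
    refine ⟨a, fun h0 => hp.out.ne_one ?_, ha ▸ addOrderOf_nsmul_eq_zero a⟩
    rw [← ha, h0, addOrderOf_zero]

lemma min_val_sub_val_eq_div_two_iff (d : ZMod n) :
    min d.val (n - d.val) = n / 2 ↔ d = ((n / 2 : ℕ) : ZMod n) ∨ d = -((n / 2 : ℕ) : ZMod n) := by
  have ht : ((n / 2 : ℕ) : ZMod n).val = n / 2 :=
    ZMod.val_cast_of_lt (Nat.div_lt_self (Nat.pos_of_neZero n) one_lt_two)
  have ht0 : ((n / 2 : ℕ) : ZMod n) = 0 ↔ n / 2 = 0 := by rw [← ZMod.val_eq_zero, ht]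
  rw [← (ZMod.val_injective n).eq_iff, ← (ZMod.val_injective n).eq_iff, ZMod.neg_val, ht]
  have := d.val_lt
  split_ifs with h0
  · have := ht0.mp h0; omega
  · have := mt ht0.mpr h0; omega

end ZMod

def complDistHalfAdjMatrix (n : ℕ) : Matrix (ZMod n) (ZMod n) ℚ :=
  of fun r s => if r ≠ s ∧ min (r - s).val (n - (r - s).val) ≠ n / 2 then (1 : ℚ) else 0

section ComplDistHalf

variable (n : ℕ) [NeZero n]

local notation "τ" => ((n / 2 : ℕ) : ZMod n)

lemma det_complDistHalfAdjMatrix_eq_zero_iff_exists (hn : 2 ≤ n) :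
    (complDistHalfAdjMatrix n).det = 0 ↔ ∃ j : ZMod n, (if j = 0 then (n : ℂ) else 0) - 1 -
      ∑ d ∈ {τ, -τ}, ZMod.stdAddChar (d * j) = 0 := by
  have hS : (0 : ZMod n) ∉ ({τ, -τ} : Finset (ZMod n)) := by
    simpa [eq_comm (a := (0 : ZMod n))] using ZMod.natCast_div_two_ne_zero hn
  have hmap : (complDistHalfAdjMatrix n).map (algebraMap ℚ ℂ) = circulant fun d =>
      if d ≠ 0 ∧ d ∉ ({τ, -τ} : Finset _) then 1 else 0 := by
    refine Matrix.ext fun r s => ?_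
    simp [complDistHalfAdjMatrix, ZMod.min_val_sub_val_eq_div_two_iff, sub_eq_zero]
  rw [← map_eq_zero_iff (algebraMap ℚ ℂ) (FaithfulSMul.algebraMap_injective ℚ ℂ),
    RingHom.map_det, RingHom.mapMatrix_apply, hmap,
    (ZMod.isPrimitive_stdAddChar n).det_circulant (by simp [NeZero.ne n]),
    Finset.prod_eq_zero_iff]
  simp only [Finset.mem_univ, true_and,
    (ZMod.isPrimitive_stdAddChar n).sum_ite_ne_zero_and_notMem_mul hS, ZMod.card]

lemma det_complDistHalfAdjMatrix_eq_zero_of_even (h : Even n) :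
    (complDistHalfAdjMatrix n).det = 0 := by
  have hn : 2 ≤ n := by
    obtain ⟨k, hk⟩ := h
    have := NeZero.ne n
    omega
  have : Fact (1 < n) := ⟨hn⟩
  have h2 : 2 • τ = 0 := by
    rw [two_nsmul, ← Nat.cast_add, ← two_mul, Nat.mul_div_cancel' h.two_dvd, ZMod.natCast_self]
  have hneg : -τ = τ := neg_eq_of_add_eq_zero_left (by rwa [← two_nsmul])
  refine (det_complDistHalfAdjMatrix_eq_zero_iff_exists n hn).mpr ⟨1, ?_⟩
  rw [hneg, Finset.pair_eq_singleton, Finset.sum_singleton, mul_one, if_neg one_ne_zero,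
    AddChar.eq_neg_one_of_two_nsmul_eq_zero ZMod.injective_stdAddChar
      (ZMod.natCast_div_two_ne_zero hn) h2]
  ring

lemma det_complDistHalfAdjMatrix_eq_zero_iff_of_odd (hn : 3 ≤ n) (h : Odd n) :
    (complDistHalfAdjMatrix n).det = 0 ↔ 3 ∣ n := by
  have : Fact (1 < n) := ⟨by omega⟩
  have h2 : 2 * τ = -1 := by
    have : ((2 * (n / 2) + 1 : ℕ) : ZMod n) = 0 := by
      rw [show 2 * (n / 2) + 1 = n by have := Nat.odd_iff.mp h; omega, ZMod.natCast_self]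
    push_cast at this
    exact eq_neg_of_add_eq_zero_left this
  have hne : τ ≠ -τ := fun heq => one_ne_zero (by linear_combination h2 - heq)
  have hchar := AddChar.add_map_neg_eq_neg_one_iff (ZMod.injective_stdAddChar (N := n))
    three_ne_zero
  rw [det_complDistHalfAdjMatrix_eq_zero_iff_exists n (by omega)]
  simp only [Finset.sum_pair hne, neg_mul]
  constructor
  · rintro ⟨j, hj⟩
    by_cases hj0 : j = 0
    · rw [if_pos hj0, hj0, mul_zero, neg_zero, AddChar.map_zero_eq_one] at hj
      have : (n : ℂ) = 3 := by linear_combination hj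
      exact ⟨1, by exact_mod_cast this⟩
    · rw [if_neg hj0] at hj
      have hsum : ZMod.stdAddChar (τ * j) + ZMod.stdAddChar (-(τ * j)) = -1 := by
        linear_combination -hj
      exact ZMod.exists_ne_zero_nsmul_eq_zero_iff.mp ⟨_, (hchar _).mp hsum⟩
  · intro h3
    obtain ⟨a, ha, h3a⟩ := (ZMod.exists_ne_zero_nsmul_eq_zero_iff (p := 3)).mpr h3
    have hτa : τ * (-2 * a) = a := by linear_combination (-a) * h2
    refine ⟨-2 * a, ?_⟩
    have hj0 : -2 * a ≠ 0 := fun h0 => ha (by rw [← hτa, h0, mul_zero])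
    rw [if_neg hj0, hτa, (hchar a).mpr ⟨ha, h3a⟩]
    ring

end ComplDistHalf

/-- The complement of the distance-`τ` graph of `C_n`, `τ = ⌊n/2⌋`: it is
singular whenever `n` is even, and for odd `n` it is singular iff
`n ≡ 3 (mod 6)`. -/
theorem complement_distance_tau_singular (n : ℕ) [NeZero n] (hn : 4 ≤ n) :
    (Even n →
        (Matrix.of fun r s : ZMod n =>
          if r ≠ s ∧ min (r - s).val (n - (r - s).val) ≠ n / 2 then (1 : ℚ)
          else 0).det = 0) ∧
      (Odd n →
        ((Matrix.of fun r s : ZMod n =>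
          if r ≠ s ∧ min (r - s).val (n - (r - s).val) ≠ n / 2 then (1 : ℚ)
          else 0).det = 0 ↔ n % 6 = 3)) := by
  refine ⟨det_complDistHalfAdjMatrix_eq_zero_of_even n, fun hodd => ?_⟩
  rw [← complDistHalfAdjMatrix, det_complDistHalfAdjMatrix_eq_zero_iff_of_odd n (by omega) hodd]
  have := Nat.odd_iff.mp hodd
  omega
end

section
/- Fix n ≥ 4 and 1 ≤ i < τ = ⌊n/2⌋. The complement graph (C_n^i)^c is singular if and only if 3 divides n and gcd(i, n) divides n/3. -/
/-!
Put `a = i` in `G = ZMod n`, so the matrix is `J - I - P_a - P_{-a}` and `v` lies in its kernel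
iff every three-term sum `v (r - a) + v r + v (r + a)` equals `S = ∑ v`. A function whose
three-term sums vanish is `3a`-periodic. If `3 ∤ ord a` then `a ∈ ⟨3a⟩`, so `v - S / 3` is also
`a`-periodic, hence zero; then `v` is constant and `S = |G| S / 3` forces `v = 0` unless
`|G| = 3`, where `ord a = 3`. If `3 ∣ ord a` then `a ∉ ⟨3a⟩` and `1_{⟨3a⟩} - 1_{a + ⟨3a⟩}` is a
nonzero kernel vector. Finally `ord a = n / gcd(n, i)`.
-/

open Finset Function Matrix

section ThreeTermRelation

variable {G : Type*} [AddCommGroup G] {a : G}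

theorem Function.Periodic.of_forall_three_term_eq_zero {M : Type*} [AddCommGroup M] {v : G → M}
    (hv : ∀ r, v (r - a) + v r + v (r + a) = 0) : Periodic v (3 • a) := by
  intro r
  have h₁ := hv (r + a)
  have h₂ := hv (r + a + a)
  simp only [add_sub_cancel_right] at h₁ h₂
  calc v (r + 3 • a)
      = (v (r + a) + v (r + a + a) + v (r + a + a + a)) - (v r + v (r + a) + v (r + a + a))
          + v r := by rw [show r + 3 • a = r + a + a + a by abel]; abel
    _ = v r := by rw [h₁, h₂, sub_zero, zero_add]

theorem mem_zmultiples_three_nsmul_iff :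
    a ∈ AddSubgroup.zmultiples (3 • a) ↔ ¬ 3 ∣ addOrderOf a := by
  rw [mem_zmultiples_nsmul_iff, ← Nat.Coprime, Nat.Prime.coprime_iff_not_dvd Nat.prime_three]

theorem eq_zero_of_forall_three_term_eq_zero {K : Type*} [Field K] [CharZero K]
    (h3 : ¬ 3 ∣ addOrderOf a) {v : G → K} (hv : ∀ r, v (r - a) + v r + v (r + a) = 0) :
    v = 0 := by
  obtain ⟨k, hk⟩ := AddSubgroup.mem_zmultiples_iff.mp (mem_zmultiples_three_nsmul_iff.mpr h3)
  have hper : Periodic v a := hk ▸ (Periodic.of_forall_three_term_eq_zero hv).zsmul k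
  funext r
  have h := hv r
  rw [hper.sub_eq, hper] at h
  have : (3 : K) * v r = 0 := by linear_combination h
  simpa using this

/-- The witness `1_{⟨3 • a⟩} - 1_{a + ⟨3 • a⟩}` has telescoping three-term sums. -/
theorem exists_ne_zero_forall_three_term_eq_zero {K : Type*} [Ring K] [Nontrivial K]
    (h3 : 3 ∣ addOrderOf a) : ∃ v : G → K, v ≠ 0 ∧ ∀ r, v (r - a) + v r + v (r + a) = 0 := by
  classical
  set H := AddSubgroup.zmultiples (3 • a)
  have ha : a ∉ H := mem_zmultiples_three_nsmul_iff.not.mpr (not_not.mpr h3)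
  refine ⟨fun r => (if r ∈ H then 1 else 0) - (if r - a ∈ H then 1 else 0), ?_, fun r => ?_⟩
  · intro h
    simpa [ha] using congrFun h 0
  · have hshift : r + a ∈ H ↔ r - a - a ∈ H := by
      rw [show r + a = r - a - a + 3 • a by abel]
      exact H.add_mem_cancel_right (AddSubgroup.mem_zmultiples _)
    simp only [add_sub_cancel_right, hshift]
    abel

theorem sum_eq_zero_of_forall_three_term_eq_zero [Fintype G] {K : Type*} [Field K] [CharZero K]
    {v : G → K} (hv : ∀ r, v (r - a) + v r + v (r + a) = 0) : ∑ r, v r = 0 := by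
  have hshift : ∀ b : G, ∑ r, v (r + b) = ∑ r, v r := fun b =>
    Fintype.sum_equiv (Equiv.addRight b) _ _ fun _ => rfl
  have h3 : 3 * ∑ r, v r = 0 := by
    calc 3 * ∑ r, v r = ∑ r, (v (r + -a) + v r + v (r + a)) := by
          simp only [sum_add_distrib, hshift]; ring
      _ = 0 := by simp only [← sub_eq_add_neg, hv, sum_const_zero]
  simpa using h3

end ThreeTermRelation

section ComplementCayleyMatrix

variable {G K : Type*} [AddCommGroup G] [Fintype G] [DecidableEq G] [Field K] {a : G}

/-- The adjacency matrix of the complement of the Cayley graph of `G` with connection set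
`{a, -a}`; for `G = ZMod n` and `a = i` it is that of `(C_n^i)ᶜ`. -/
def complementCayleyMatrix (K : Type*) [Field K] (a : G) : Matrix G G K :=
  Matrix.of fun r s => if r ≠ s ∧ r - s ≠ a ∧ r - s ≠ -a then 1 else 0

theorem complementCayleyMatrix_mulVec_apply (h2a : 2 • a ≠ 0) (v : G → K) (r : G) :
    (complementCayleyMatrix K a *ᵥ v) r = ∑ s, v s - (v (r - a) + v r + v (r + a)) := by
  have ha : a ≠ 0 := by rintro rfl; simp at h2a
  have hadj : ∀ s, (r ≠ s ∧ r - s ≠ a ∧ r - s ≠ -a) ↔ s ∉ ({r - a, r, r + a} : Finset G) := by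
    intro s
    have e₁ : r - s = a ↔ s = r - a := by constructor <;> rintro rfl <;> abel
    have e₂ : r - s = -a ↔ s = r + a := by rw [← neg_sub, neg_inj, sub_eq_iff_eq_add']
    simp only [mem_insert, mem_singleton, not_or, Ne, e₁, e₂, eq_comm (a := r)]
    tauto
  have hne₁ : r - a ∉ ({r, r + a} : Finset G) := by
    simp only [mem_insert, mem_singleton, not_or]
    refine ⟨by simpa [sub_eq_self] using ha, fun h => h2a ?_⟩
    calc 2 • a = (r + a) - (r - a) := by abel
      _ = 0 := by rw [h, sub_self]
  have hne₂ : r ∉ ({r + a} : Finset G) := by simpa [eq_comm] using ha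
  simp only [complementCayleyMatrix, mulVec, dotProduct, of_apply, ite_mul, one_mul, zero_mul,
    hadj, ite_not]
  have hsplit : ∀ s, (if s ∈ ({r - a, r, r + a} : Finset G) then 0 else v s)
      = v s - if s ∈ ({r - a, r, r + a} : Finset G) then v s else 0 := by
    intro s; split_ifs <;> ring
  rw [sum_congr rfl fun s _ => hsplit s, sum_sub_distrib, sum_ite_mem, univ_inter,
    sum_insert hne₁, sum_insert hne₂, sum_singleton, add_assoc]

theorem eq_sum_div_three_of_mulVec_eq_zero [CharZero K] (h2a : 2 • a ≠ 0)
    (h3 : ¬ 3 ∣ addOrderOf a) {v : G → K} (hMv : complementCayleyMatrix K a *ᵥ v = 0) (r : G) :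
    v r = (∑ s, v s) / 3 := by
  have h := eq_zero_of_forall_three_term_eq_zero h3 (v := fun r => v r - (∑ s, v s) / 3)
    fun r => by
      have := complementCayleyMatrix_mulVec_apply h2a v r
      rw [hMv, Pi.zero_apply] at this
      linear_combination this
  exact sub_eq_zero.mp (congrFun h r)

theorem three_dvd_addOrderOf_of_mulVec_eq_zero [CharZero K] (h2a : 2 • a ≠ 0) {v : G → K}
    (hv : v ≠ 0) (hMv : complementCayleyMatrix K a *ᵥ v = 0) : 3 ∣ addOrderOf a := by
  by_contra h3
  have hconst := eq_sum_div_three_of_mulVec_eq_zero h2a h3 hMv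
  set S := ∑ s, v s
  have hS : S ≠ 0 := fun hS => hv (funext fun r => by rw [hconst, hS, zero_div, Pi.zero_apply])
  have hcard : Fintype.card G = 3 := by
    have hsum : S = Fintype.card G * (S / 3) := by
      calc S = ∑ _r : G, S / 3 := sum_congr rfl fun r _ => hconst r
        _ = Fintype.card G * (S / 3) := by rw [sum_const, card_univ, nsmul_eq_mul]
    have h : (Fintype.card G : K) * S = (3 : ℕ) * S := by push_cast; linear_combination -3 * hsum
    exact_mod_cast mul_right_cancel₀ hS h
  rcases (Nat.dvd_prime Nat.prime_three).mp (hcard ▸ addOrderOf_dvd_card (x := a)) with h1 | h3'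
  · exact h2a (by rw [AddMonoid.addOrderOf_eq_one_iff.mp h1, nsmul_zero])
  · exact h3 h3'.symm.dvd

theorem det_complementCayleyMatrix_eq_zero_iff [CharZero K] (h2a : 2 • a ≠ 0) :
    (complementCayleyMatrix K a).det = 0 ↔ 3 ∣ addOrderOf a := by
  rw [← exists_mulVec_eq_zero_iff]
  refine ⟨fun ⟨v, hv, hMv⟩ => three_dvd_addOrderOf_of_mulVec_eq_zero h2a hv hMv, fun h3 => ?_⟩
  obtain ⟨v, hv, hrel⟩ := exists_ne_zero_forall_three_term_eq_zero (K := K) h3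
  refine ⟨v, hv, funext fun r => ?_⟩
  rw [complementCayleyMatrix_mulVec_apply h2a, sum_eq_zero_of_forall_three_term_eq_zero hrel,
    hrel, sub_zero, Pi.zero_apply]

end ComplementCayleyMatrix

theorem ZMod.min_val_sub_val_eq_iff_s10 {n i : ℕ} [NeZero n] (hi : i ≤ n / 2) (x : ZMod n) :
    min x.val (n - x.val) = i ↔ x = i ∨ x = -i := by
  rw [← valMinAbs_natAbs_eq_min, ← natAbs_valMinAbs_eq_natAbs_valMinAbs,
    valMinAbs_natCast_of_le_half hi, Int.natAbs_natCast]

theorem ZMod.two_nsmul_natCast_ne_zero {n i : ℕ} (hi : 0 < i) (hin : 2 * i < n) :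
    2 • (i : ZMod n) ≠ 0 := by
  rw [two_nsmul, ← Nat.cast_add, Ne, ZMod.natCast_eq_zero_iff]
  exact Nat.not_dvd_of_pos_of_lt (by omega) (by omega)

theorem Nat.dvd_div_iff_dvd_and_dvd_div {p d n : ℕ} (hd : d ∣ n) :
    p ∣ n / d ↔ p ∣ n ∧ d ∣ n / p := by
  rw [Nat.dvd_div_iff_mul_dvd hd]
  refine ⟨fun h => ⟨dvd_of_mul_left_dvd h, ?_⟩, fun ⟨hp, h⟩ => ?_⟩
  · rwa [Nat.dvd_div_iff_mul_dvd (dvd_of_mul_left_dvd h), mul_comm]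
  · rwa [Nat.dvd_div_iff_mul_dvd hp, mul_comm] at h

theorem complementCayleyMatrix_natCast {K : Type*} [Field K] {n i : ℕ} [NeZero n]
    (hi : i ≤ n / 2) :
    complementCayleyMatrix K (i : ZMod n) = Matrix.of fun r s : ZMod n =>
        if r ≠ s ∧ min (r - s).val (n - (r - s).val) ≠ i then (1 : K) else 0 := by
  ext r s
  simp only [complementCayleyMatrix, of_apply, Ne, ZMod.min_val_sub_val_eq_iff_s10 hi, not_or]

theorem complement_distance_graph_singular_iff_general (n i : ℕ) [NeZero n]
    (hi : 1 ≤ i) (hin : i < n / 2) :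
    (Matrix.of fun r s : ZMod n =>
        if r ≠ s ∧ min (r - s).val (n - (r - s).val) ≠ i then (1 : ℚ)
        else 0).det = 0 ↔
      (3 ∣ n ∧ Nat.gcd i n ∣ n / 3) := by
  rw [← complementCayleyMatrix_natCast hin.le,
    det_complementCayleyMatrix_eq_zero_iff (ZMod.two_nsmul_natCast_ne_zero hi (by omega)),
    ZMod.addOrderOf_coe i (NeZero.ne n), Nat.gcd_comm,
    Nat.dvd_div_iff_dvd_and_dvd_div (Nat.gcd_dvd_right i n)]

/-- For `1 ≤ i < ⌊n/2⌋`, the complement `(C_n^i)^c` of the distance-`i` graph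
of the `n`-cycle is singular iff `3 ∣ n` and `gcd(i,n) ∣ n/3`. -/
theorem complement_distance_graph_singular_iff (n i : ℕ) [NeZero n]
    (hn : 4 ≤ n) (hi : 1 ≤ i) (hin : i < n / 2) :
    (Matrix.of fun r s : ZMod n =>
        if r ≠ s ∧ min (r - s).val (n - (r - s).val) ≠ i then (1 : ℚ)
        else 0).det = 0 ↔
      (3 ∣ n ∧ Nat.gcd i n ∣ n / 3) :=
  complement_distance_graph_singular_iff_general n i hi hin
end

section
/- The complement C_n^c of the cycle graph C_n (n ≥ 4) is singular if and only if 3 divides n. -/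
/-!
Since the matrix is `J - I - A(C_n)`, a vector `v` lies in its kernel iff every window
`v (r - 1) + v r + v (r + 1)` equals `∑ s, v s`. Comparing consecutive windows makes `v`
3-periodic. If `3 ∤ n` then `3` is a unit of `ZMod n`, so `v` is constant and the window
equation reads `(n - 3) v = 0`, forcing `v = 0`. If `3 ∣ n`, the pattern `1, -1, 0, 1, -1, 0, …`
has all windows and hence (by shift invariance) the total sum equal to zero, so it is a nonzero
kernel vector.
-/

open Finset Function Matrix

theorem ZMod.val_neg_one_eq_sub_one {n : ℕ} [Fact (1 < n)] : (-1 : ZMod n).val = n - 1 := by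
  rw [ZMod.val_neg_of_ne_zero, ZMod.val_one]

theorem ZMod.min_val_sub_val_eq_one_iff {n : ℕ} [Fact (1 < n)] (d : ZMod n) :
    min d.val (n - d.val) = 1 ↔ d = 1 ∨ d = -1 := by
  have hlt := d.val_lt
  have h1 : n ≠ 1 := (Fact.out : 1 < n).ne'
  rw [← (ZMod.val_injective n).eq_iff, ← (ZMod.val_injective n).eq_iff, ZMod.val_one,
    ZMod.val_neg_one_eq_sub_one]
  omega

def cycleComplementMatrix (R : Type*) [Zero R] [One R] (n : ℕ) : Matrix (ZMod n) (ZMod n) R :=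
  Matrix.of fun r s : ZMod n => if r ≠ s ∧ min (r - s).val (n - (r - s).val) ≠ 1 then 1 else 0

theorem cycleComplement_adj_iff_not_mem {n : ℕ} [Fact (1 < n)] (r s : ZMod n) :
    (r ≠ s ∧ min (r - s).val (n - (r - s).val) ≠ 1) ↔
      s ∉ ({r - 1, r, r + 1} : Finset (ZMod n)) := by
  rw [ne_eq, Ne, ZMod.min_val_sub_val_eq_one_iff, sub_eq_iff_eq_add, sub_eq_iff_eq_add]
  simp only [mem_insert, mem_singleton, eq_sub_iff_add_eq]
  constructor <;> intro h <;> grind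

theorem ZMod.sub_one_ne_add_one {n : ℕ} (hn : 3 ≤ n) (r : ZMod n) : r - 1 ≠ r + 1 := by
  intro h
  have h2 : ((2 : ℕ) : ZMod n) = 0 := by push_cast; linear_combination -h
  have := Nat.le_of_dvd two_pos ((ZMod.natCast_eq_zero_iff 2 n).mp h2)
  omega

theorem cycleComplementMatrix_mulVec {R : Type*} [Ring R] {n : ℕ} [NeZero n] (hn : 3 ≤ n)
    (v : ZMod n → R) (r : ZMod n) :
    (cycleComplementMatrix R n *ᵥ v) r = ∑ s, v s - (v (r - 1) + v r + v (r + 1)) := by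
  have : Fact (1 < n) := ⟨by omega⟩
  have hsum : ∑ s ∈ {r - 1, r, r + 1}, v s = v (r - 1) + v r + v (r + 1) := by
    have h1 : r - 1 ≠ r := by simp
    have h2 : r ≠ r + 1 := by simp
    rw [sum_insert (by simp [h1, ZMod.sub_one_ne_add_one hn]), sum_pair h2, add_assoc]
  simp only [cycleComplementMatrix, mulVec, dotProduct, of_apply, ite_mul, one_mul, zero_mul,
    cycleComplement_adj_iff_not_mem]
  rw [← sum_filter, filter_not, filter_mem_eq_inter, univ_inter, sum_sdiff_eq_sub (subset_univ _),
    hsum]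

theorem cycleComplementMatrix_mulVec_eq_zero_iff {R : Type*} [Ring R] {n : ℕ} [NeZero n]
    (hn : 3 ≤ n) (v : ZMod n → R) :
    cycleComplementMatrix R n *ᵥ v = 0 ↔ ∀ r, v (r - 1) + v r + v (r + 1) = ∑ s, v s := by
  simp only [funext_iff, cycleComplementMatrix_mulVec hn, Pi.zero_apply, sub_eq_zero,
    eq_comm (a := ∑ s, v s)]

theorem Function.periodic_of_forall_consecutive_sum_eq {G K : Type*} [AddCommGroup G] [CommRing K]
    {v : G → K} {a : G} {c : K} (h : ∀ r, v (r - a) + v r + v (r + a) = c) :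
    Periodic v (a + a + a) := by
  intro r
  have h₁ := h (r + a + a)
  have h₂ := h (r + a)
  simp only [add_sub_cancel_right] at h₁ h₂
  rw [← add_assoc, ← add_assoc]
  linear_combination h₁ - h₂

theorem ZMod.apply_eq_apply_zero_of_periodic {α : Type*} {n : ℕ} [NeZero n] {f : ZMod n → α}
    {c : ZMod n} (h : Periodic f c) (hc : IsUnit c) (x : ZMod n) : f x = f 0 := by
  obtain ⟨u, rfl⟩ := hc
  have := h.nat_mul_eq (↑u⁻¹ * x).val
  rwa [ZMod.natCast_zmod_val, mul_right_comm, Units.inv_mul, one_mul] at this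

theorem Fintype.sum_eq_zero_of_forall_consecutive_sum_eq_zero {G K : Type*} [AddCommGroup G]
    [Fintype G] [Field K] [CharZero K] {v : G → K} (a : G)
    (h : ∀ r, v (r - a) + v r + v (r + a) = 0) : ∑ r, v r = 0 := by
  have hshift (b : G) : ∑ r, v (r + b) = ∑ r, v r :=
    Fintype.sum_equiv (Equiv.addRight b) _ _ fun _ => rfl
  have : 3 * ∑ r, v r = 0 := calc
    3 * ∑ r, v r = ∑ r, v (r - a) + ∑ r, v r + ∑ r, v (r + a) := by
      simp only [sub_eq_add_neg, hshift]; ring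
    _ = 0 := by
      rw [← sum_add_distrib, ← sum_add_distrib]
      exact Finset.sum_eq_zero fun r _ => h r
  simpa using this

theorem eq_zero_of_cycleComplementMatrix_mulVec_eq_zero {K : Type*} [Field K] [CharZero K]
    {n : ℕ} [NeZero n] (hn : 4 ≤ n) (h3 : ¬ 3 ∣ n) {v : ZMod n → K}
    (hv : cycleComplementMatrix K n *ᵥ v = 0) : v = 0 := by
  rw [cycleComplementMatrix_mulVec_eq_zero_iff (by omega)] at hv
  have hunit : IsUnit (3 : ZMod n) := by
    simpa using (ZMod.isUnit_iff_coprime 3 n).mpr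
      ((Nat.Prime.coprime_iff_not_dvd Nat.prime_three).mpr h3)
  have hperiodic : Periodic v 3 := by
    simpa [one_add_one_eq_two, two_add_one_eq_three] using periodic_of_forall_consecutive_sum_eq hv
  have hconst := ZMod.apply_eq_apply_zero_of_periodic hperiodic hunit
  have hsum : ∑ s, v s = n * v 0 := by simp [hconst]
  have hn3 : (n : K) - 3 ≠ 0 := sub_ne_zero.mpr (by exact_mod_cast (by omega : n ≠ 3))
  have hv0 : ((n : K) - 3) * v 0 = 0 := by
    have := hv 0
    rw [hconst (0 - 1), hconst (0 + 1), hsum] at this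
    linear_combination -this
  ext r
  rw [hconst r, (mul_eq_zero.mp hv0).resolve_left hn3, Pi.zero_apply]

theorem exists_ne_zero_cycleComplementMatrix_mulVec_eq_zero {K : Type*} [Field K] [CharZero K]
    {n : ℕ} [NeZero n] (hn : 3 ≤ n) (h3 : 3 ∣ n) :
    ∃ v ≠ 0, cycleComplementMatrix K n *ᵥ v = 0 := by
  let w : ZMod 3 → K := fun k => if k = 0 then 1 else if k = 1 then -1 else 0
  have hw : ∀ k, w (k - 1) + w k + w (k + 1) = 0 := by
    have : ∀ k : ZMod 3, k = 0 ∨ k = 1 ∨ k = 2 := by decide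
    intro k; rcases this k with rfl | rfl | rfl <;> simp +decide [w]
  let ρ := ZMod.castHom h3 (ZMod 3)
  refine ⟨fun r => w (ρ r), fun h => by simpa [w] using congrFun h 0, ?_⟩
  have hv : ∀ r, w (ρ (r - 1)) + w (ρ r) + w (ρ (r + 1)) = 0 := fun r => by
    simpa only [map_sub, map_add, map_one] using hw (ρ r)
  rw [cycleComplementMatrix_mulVec_eq_zero_iff hn,
    Fintype.sum_eq_zero_of_forall_consecutive_sum_eq_zero 1 hv]
  exact hv

/-- The complement `C_n^c` of the cycle graph (`n ≥ 4`) is singular iff `3 ∣ n`. -/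
theorem complement_cycle_singular_iff (n : ℕ) [NeZero n] (hn : 4 ≤ n) :
    (Matrix.of fun r s : ZMod n =>
        if r ≠ s ∧ min (r - s).val (n - (r - s).val) ≠ 1 then (1 : ℚ)
        else 0).det = 0 ↔ 3 ∣ n := by
  change (cycleComplementMatrix ℚ n).det = 0 ↔ 3 ∣ n
  rw [← exists_mulVec_eq_zero_iff]
  constructor
  · rintro ⟨v, hv, hMv⟩
    by_contra h3
    exact hv (eq_zero_of_cycleComplementMatrix_mulVec_eq_zero hn h3 hMv)
  · exact exists_ne_zero_cycleComplementMatrix_mulVec_eq_zero (by omega)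
end

section
/- Let n ≥ 3 and 1 ≤ r < ⌊n/2⌋. The r-th power C_n^{(r)} of the cycle graph (vertices at cycle-distance at most r are adjacent) is singular if and only if either gcd(n, r) > 1, or gcd(n, r) = 1, n is even, and gcd(r+1, n) divides n/2. -/
/-!
The adjacency matrix is the circulant matrix of `c = 1_{1 ≤ |d| ≤ r}` on `ZMod n`, so the
characters of `ZMod n` diagonalise it, with eigenvalues `λ(ζ) = ∑ d, c d * ζ ^ d` for `ζ`
running over the `n`-th roots of unity. Here `λ(1) = 2r ≠ 0`, and summing the two
geometric progressions gives `(ζ - 1) ζ^r λ(ζ) = (ζ^r - 1)(ζ^(r+1) + 1)`. Hence the matrix is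
singular iff `j * r = 0` for some `j ≠ 0` in `ZMod n`, i.e. `gcd(n, r) > 1`, or `n` is even and
`j * (r + 1) = n / 2` is solvable, i.e. `gcd(r + 1, n) ∣ n / 2`.
-/

open Finset Matrix Function

theorem ZMod.finEquiv_apply {n : ℕ} [NeZero n] (k : Fin n) : ZMod.finEquiv n k = (k : ℕ) := by
  obtain ⟨m, rfl⟩ := Nat.exists_eq_succ_of_ne_zero (NeZero.ne n)
  exact (Fin.cast_val_eq_self k).symm

theorem ZMod.exists_ne_zero_mul_natCast_eq_zero_iff {n : ℕ} [NeZero n] (a : ℕ) :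
    (∃ j : ZMod n, j ≠ 0 ∧ j * a = 0) ↔ ¬ a.Coprime n := by
  rw [← ZMod.isUnit_iff_coprime, isUnit_iff_mem_nonZeroDivisors_of_finite,
    mem_nonZeroDivisors_iff_right]
  push Not
  exact exists_congr fun _ => and_comm

theorem ZMod.exists_mul_natCast_eq_natCast_iff {n : ℕ} (a b : ℕ) :
    (∃ j : ZMod n, j * a = b) ↔ Nat.gcd a n ∣ b := by
  constructor
  · rintro ⟨j, hj⟩
    have h := congrArg (ZMod.castHom (Nat.gcd_dvd_right a n) (ZMod (Nat.gcd a n))) hj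
    rwa [map_mul, map_natCast, map_natCast,
      (ZMod.natCast_eq_zero_iff _ _).mpr (Nat.gcd_dvd_left a n), mul_zero, eq_comm,
      ZMod.natCast_eq_zero_iff] at h
  · rintro ⟨c, rfl⟩
    refine ⟨(a : ZMod n)⁻¹ * c, ?_⟩
    rw [mul_right_comm, mul_comm _ (a : ZMod n), ZMod.mul_inv_eq_gcd, ZMod.val_natCast,
      ← Nat.gcd_rec, Nat.gcd_comm, Nat.cast_mul]

theorem AddChar.zmod_apply_eq_neg_one_iff {n : ℕ} [NeZero n] {K : Type*} [CommRing K] [IsDomain K]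
    [CharZero K] {ψ : AddChar (ZMod n) K} (hψ : Injective ψ) (x : ZMod n) :
    ψ x = -1 ↔ Even n ∧ x = (n / 2 : ℕ) := by
  have hhalf (hn : Even n) : ψ (n / 2 : ℕ) = -1 := by
    have hn2 : n / 2 + n / 2 = n := by have := Nat.even_iff.mp hn; omega
    have hsq : ψ (n / 2 : ℕ) * ψ (n / 2 : ℕ) = 1 := by
      rw [← map_add_eq_mul, ← Nat.cast_add, hn2, ZMod.natCast_self, map_zero_eq_one]
    refine (mul_self_eq_one_iff.mp hsq).resolve_left fun h => ?_
    have hdvd := (ZMod.natCast_eq_zero_iff _ _).mp (hψ (h.trans (map_zero_eq_one ψ).symm))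
    have hn0 := NeZero.pos n
    exact Nat.not_dvd_of_pos_of_lt (by omega) (by omega) hdvd
  constructor
  · intro hx
    have hn : Even n := by
      by_contra hodd
      have h := map_nsmul_eq_pow ψ n x
      rw [nsmul_eq_mul, ZMod.natCast_self, zero_mul, map_zero_eq_one, hx,
        (Nat.not_even_iff_odd.mp hodd).neg_one_pow] at h
      norm_num at h
    exact ⟨hn, hψ (hx.trans (hhalf hn).symm)⟩
  · rintro ⟨hn, rfl⟩
    exact hhalf hn

namespace Matrix

variable {R : Type*} [CommRing R]

theorem circulant_mul_addChar {G : Type*} [CommRing G] [Fintype G] [DecidableEq G] (c : G → R)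
    (ψ : AddChar G R) :
    circulant c * of (fun u j => ψ (-(u * j))) =
      of (fun u j => ψ (-(u * j))) * diagonal (fun j => ∑ d, c d * ψ (d * j)) := by
  ext u j
  rw [mul_diagonal, mul_apply, Finset.mul_sum]
  refine Fintype.sum_equiv (Equiv.subLeft u) _ _ fun v => ?_
  simp only [circulant_apply, of_apply, Equiv.subLeft_apply]
  rw [mul_left_comm, ← AddChar.map_add_eq_mul]
  ring_nf

variable {n : ℕ} [NeZero n]

theorem det_of_addChar_ne_zero [IsDomain R] {ψ : AddChar (ZMod n) R} (hψ : Injective ψ) :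
    (of fun u j : ZMod n => ψ (-(u * j))).det ≠ 0 := by
  let e : Fin n ≃ ZMod n := ZMod.finEquiv n
  have hV : (of fun u j : ZMod n => ψ (-(u * j))).submatrix e e =
      vandermonde fun i => ψ (-e i) := by
    ext i k
    rw [submatrix_apply, of_apply, vandermonde_apply, ← AddChar.map_nsmul_eq_pow, nsmul_eq_mul]
    simp only [e, EquivLike.coe_coe, ZMod.finEquiv_apply]
    ring_nf
  rw [← det_submatrix_equiv_self e, hV, det_vandermonde_ne_zero_iff]
  exact hψ.comp (neg_injective.comp e.injective)

theorem det_circulant_eq_prod [IsDomain R] {ψ : AddChar (ZMod n) R} (hψ : Injective ψ)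
    (c : ZMod n → R) : (circulant c).det = ∏ j, ∑ d, c d * ψ (d * j) := by
  have h := congrArg det (circulant_mul_addChar c ψ)
  rw [det_mul, det_mul, det_diagonal, mul_comm] at h
  exact mul_left_cancel₀ (det_of_addChar_ne_zero hψ) h

end Matrix

/-- `circulant (powCycleSymbol R n r)` is the adjacency matrix of `C_n^{(r)}`; `min d.val (n - d.val)`
is the cycle distance from `0` to `d`. -/
def powCycleSymbol (R : Type*) [Zero R] [One R] (n r : ℕ) (d : ZMod n) : R :=
  if 1 ≤ min d.val (n - d.val) ∧ min d.val (n - d.val) ≤ r then 1 else 0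

theorem map_powCycleSymbol {R S : Type*} [Semiring R] [Semiring S] (f : R →+* S) {n r : ℕ}
    (d : ZMod n) : f (powCycleSymbol R n r d) = powCycleSymbol S n r d := by
  unfold powCycleSymbol
  split_ifs <;> simp

section powCycleSymbol

variable {n r : ℕ} [NeZero n]

theorem sum_powCycleSymbol_mul_pow {R : Type*} [CommRing R] (h2r : 2 * r < n) (ζ : R) :
    ∑ d : ZMod n, powCycleSymbol R n r d * ζ ^ d.val =
      ∑ k ∈ Icc 1 r, ζ ^ k + ∑ k ∈ Ico (n - r) n, ζ ^ k := by
  have hsupp : (range n).filter (fun k => 1 ≤ min k (n - k) ∧ min k (n - k) ≤ r) =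
      Icc 1 r ∪ Ico (n - r) n := by
    ext k
    simp only [mem_filter, mem_range, mem_union, mem_Icc, mem_Ico]
    omega
  have hdisj : Disjoint (Icc 1 r) (Ico (n - r) n) := by
    rw [disjoint_left]
    intro k hk hk'
    simp only [mem_Icc, mem_Ico] at hk hk'
    omega
  rw [← sum_union hdisj, ← hsupp, sum_filter, ← Fin.sum_univ_eq_sum_range]
  refine (Fintype.sum_equiv (ZMod.finEquiv n : Fin n ≃ ZMod n) _ _ fun k => ?_).symm
  rw [EquivLike.coe_coe, ZMod.finEquiv_apply, powCycleSymbol, ZMod.val_natCast_of_lt k.isLt]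
  split_ifs <;> simp

theorem sum_powCycleSymbol_mul_pow_mul {R : Type*} [CommRing R] (h2r : 2 * r < n) {ζ : R}
    (hζ : ζ ^ n = 1) :
    (∑ d : ZMod n, powCycleSymbol R n r d * ζ ^ d.val) * ((ζ - 1) * ζ ^ r) =
      (ζ ^ r - 1) * (ζ ^ (r + 1) + 1) := by
  have hlow : (∑ k ∈ Icc 1 r, ζ ^ k) * (ζ - 1) = ζ ^ (r + 1) - ζ := by
    rw [← Ico_add_one_right_eq_Icc, geom_sum_Ico_mul ζ (by omega), pow_one]
  have hhigh : (∑ k ∈ Ico (n - r) n, ζ ^ k) * (ζ - 1) = ζ ^ n - ζ ^ (n - r) :=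
    geom_sum_Ico_mul ζ (by omega)
  have hwrap : ζ ^ (n - r) * ζ ^ r = 1 := by rw [← pow_add, Nat.sub_add_cancel (by omega), hζ]
  rw [sum_powCycleSymbol_mul_pow h2r]
  linear_combination (hlow + hhigh + hζ) * ζ ^ r - hwrap

theorem sum_powCycleSymbol_mul_pow_eq_zero_iff {K : Type*} [Field K] [CharZero K] (hr : 1 ≤ r)
    (h2r : 2 * r < n) {ζ : K} (hζ : ζ ^ n = 1) :
    ∑ d : ZMod n, powCycleSymbol K n r d * ζ ^ d.val = 0 ↔
      (ζ ≠ 1 ∧ ζ ^ r = 1) ∨ ζ ^ (r + 1) = -1 := by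
  by_cases hζ1 : ζ = 1
  · subst hζ1
    rw [sum_powCycleSymbol_mul_pow h2r]
    simp only [one_pow, sum_const, Nat.card_Icc, Nat.card_Ico, nsmul_one, ne_eq,
      not_true_eq_false, false_and, false_or]
    exact iff_of_false (by exact_mod_cast (by omega : r + 1 - 1 + (n - (n - r)) ≠ 0)) (by norm_num)
  · have hζ0 : ζ ≠ 0 := by rintro rfl; simp [NeZero.ne n] at hζ
    rw [← mul_left_inj' (mul_ne_zero (sub_ne_zero.mpr hζ1) (pow_ne_zero r hζ0)),
      sum_powCycleSymbol_mul_pow_mul h2r hζ, zero_mul, mul_eq_zero, sub_eq_zero,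
      add_eq_zero_iff_eq_neg]
    simp only [hζ1, ne_eq, not_false_eq_true, true_and]

theorem det_circulant_powCycleSymbol_eq_zero_iff {K : Type*} [Field K] [CharZero K]
    {ψ : AddChar (ZMod n) K} (hψ : Injective ψ) (hr : 1 ≤ r) (h2r : 2 * r < n) :
    (circulant (powCycleSymbol K n r)).det = 0 ↔
      (∃ j : ZMod n, j ≠ 0 ∧ j * r = 0) ∨
        (Even n ∧ ∃ j : ZMod n, j * (r + 1 : ℕ) = (n / 2 : ℕ)) := by
  have hpow (j : ZMod n) (m : ℕ) : ψ j ^ m = ψ (j * m) := by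
    rw [← AddChar.map_nsmul_eq_pow, nsmul_eq_mul, mul_comm]
  have heigen (j : ZMod n) : ∑ d, powCycleSymbol K n r d * ψ (d * j) =
      ∑ d : ZMod n, powCycleSymbol K n r d * ψ j ^ d.val := by
    simp only [hpow, mul_comm j, ZMod.natCast_zmod_val]
  have hroot (j : ZMod n) : ψ j ^ n = 1 := by
    rw [hpow, ZMod.natCast_self, mul_zero, AddChar.map_zero_eq_one]
  simp only [det_circulant_eq_prod hψ, prod_eq_zero_iff, mem_univ, true_and, heigen,
    sum_powCycleSymbol_mul_pow_eq_zero_iff hr h2r (hroot _)]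
  simp only [hpow, AddChar.zmod_apply_eq_neg_one_iff hψ, hψ.ne_iff' (AddChar.map_zero_eq_one ψ),
    hψ.eq_iff' (AddChar.map_zero_eq_one ψ), exists_or, exists_and_left]

end powCycleSymbol

theorem power_of_cycle_singular_iff_general (n r : ℕ) [NeZero n]
    (hr : 1 ≤ r) (hrn : r < n / 2) :
    (Matrix.of fun u v : ZMod n =>
        if 1 ≤ min (u - v).val (n - (u - v).val) ∧
            min (u - v).val (n - (u - v).val) ≤ r then (1 : ℚ) else 0).det = 0 ↔
      (1 < Nat.gcd n r ∨
        (Nat.gcd n r = 1 ∧ Even n ∧ Nat.gcd (r + 1) n ∣ n / 2)) := by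
  have hcast : ((circulant (powCycleSymbol ℚ n r)).det : ℂ) =
      (circulant (powCycleSymbol ℂ n r)).det := by
    rw [← Rat.coe_castHom, RingHom.map_det, RingHom.mapMatrix_apply, map_circulant]
    simp only [map_powCycleSymbol]
  change (circulant (powCycleSymbol ℚ n r)).det = 0 ↔ _
  rw [← Rat.cast_eq_zero (α := ℂ), hcast,
    det_circulant_powCycleSymbol_eq_zero_iff ZMod.injective_stdAddChar hr (by omega),
    ZMod.exists_ne_zero_mul_natCast_eq_zero_iff, ZMod.exists_mul_natCast_eq_natCast_iff,
    Nat.coprime_comm, Nat.Coprime]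
  have := Nat.gcd_pos_of_pos_left r (NeZero.pos n)
  grind

/-- The `r`-th power `C_n^{(r)}` of the cycle graph (`1 ≤ r < ⌊n/2⌋`) is
singular iff `gcd(n,r) > 1`, or `gcd(n,r) = 1`, `n` even and
`gcd(r+1,n) ∣ n/2`. -/
theorem power_of_cycle_singular_iff (n r : ℕ) [NeZero n]
    (hn : 3 ≤ n) (hr : 1 ≤ r) (hrn : r < n / 2) :
    (Matrix.of fun u v : ZMod n =>
        if 1 ≤ min (u - v).val (n - (u - v).val) ∧
            min (u - v).val (n - (u - v).val) ≤ r then (1 : ℚ) else 0).det = 0 ↔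
      (1 < Nat.gcd n r ∨
        (Nat.gcd n r = 1 ∧ Even n ∧ Nat.gcd (r + 1) n ∣ n / 2)) :=
  power_of_cycle_singular_iff_general n r hr hrn
end

section
/- Let n ≥ 3 and 1 ≤ r < ⌊n/2⌋. The complement graph (C_n^{(r)})^c is non-singular if and only if gcd(n, 2r+1) = 1. -/
/-!
The matrix is the circulant of the indicator `c` of `{r + 1, …, n - r - 1} ⊆ ZMod n`. The characters
`x ↦ ψ (j * x)` of a primitive additive character `ψ` are linearly independent eigenvectors of every
circulant, so its determinant is `∏ₓ ∑_{k=r+1}^{n-r-1} ψ(x)ᵏ`. At `x = 0` the factor is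
`n - 2r - 1 > 0`; otherwise it is a geometric sum, which vanishes iff `ψ(x)^(2r+1) = 1`, i.e. iff
`(2r + 1) x = 0`. So the determinant is nonzero iff `2r + 1` is a non-zero-divisor, i.e. a unit,
in `ZMod n`.
-/

open Matrix Finset

theorem sum_Ico_pow_eq_zero_iff {K : Type*} [Field K] [CharZero K] {η : K} {n r : ℕ}
    (hη : η ^ n = 1) (hrn : 2 * r + 1 < n) :
    ∑ k ∈ Ico (r + 1) (n - r), η ^ k = 0 ↔ η ≠ 1 ∧ η ^ (2 * r + 1) = 1 := by
  by_cases hη1 : η = 1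
  · simp only [hη1, one_pow, sum_const, Nat.card_Ico, nsmul_eq_mul, mul_one, ne_eq,
      not_true_eq_false, false_and, iff_false, Nat.cast_eq_zero]
    omega
  have hη0 : η ≠ 0 := by
    rintro rfl
    simp [zero_pow (by omega : n ≠ 0)] at hη
  rw [geom_sum_Ico hη1 (by omega), div_eq_zero_iff, or_iff_left (sub_ne_zero.2 hη1), sub_eq_zero,
    ← mul_left_inj' (pow_ne_zero r hη0), ← pow_add, ← pow_add, Nat.sub_add_cancel (by omega), hη,
    show r + 1 + r = 2 * r + 1 by ring, eq_comm]
  exact (and_iff_right hη1).symm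

theorem ZMod.sum_val_eq_sum_range {M : Type*} [AddCommMonoid M] {n : ℕ} [NeZero n] (f : ℕ → M) :
    ∑ w : ZMod n, f w.val = ∑ k ∈ range n, f k :=
  sum_nbij' ZMod.val Nat.cast (fun w _ => mem_range.2 w.val_lt) (fun _ _ => mem_univ _)
    (fun w _ => ZMod.natCast_zmod_val w) (fun _ hk => ZMod.val_cast_of_lt (mem_range.1 hk))
    fun _ _ => rfl

namespace AddChar

section CommRing

variable {A R : Type*} [CommRing A] [CommRing R]

theorem linearIndependent_mulShift [IsDomain R] {ψ : AddChar A R} (hψ : ψ.IsPrimitive) :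
    LinearIndependent R fun a => ⇑(ψ.mulShift a) :=
  (linearIndependent_monoidHom (Multiplicative A) R).comp (fun a => (ψ.mulShift a).toMonoidHom)
    fun _ _ h => to_mulShift_inj_of_isPrimitive hψ (toMonoidHomEquiv.injective h)

variable [Fintype A] [DecidableEq A]

theorem circulant_mul_mulShift_neg (ψ : AddChar A R) (c : A → R) :
    circulant c * of (fun i j => ψ.mulShift (-j) i) =
      of (fun i j => ψ.mulShift (-j) i) * diagonal fun j => ∑ w, c w * ψ (w * j) := by
  ext i j
  rw [mul_diagonal, Matrix.mul_apply, of_apply, mul_sum, ← (Equiv.subLeft i).sum_comp]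
  refine sum_congr rfl fun w _ => ?_
  simp only [circulant_apply, Equiv.subLeft_apply, sub_sub_cancel, of_apply, mulShift_apply]
  rw [show -j * (i - w) = -j * i + w * j by ring, map_add_eq_mul]
  ring

theorem det_circulant_eq_prod {K : Type*} [Field K] {ψ : AddChar A K}
    (hψ : ψ.IsPrimitive) (c : A → K) : (circulant c).det = ∏ j, ∑ w, c w * ψ (w * j) := by
  have hW : (of fun i j => ψ.mulShift (-j) i).det ≠ 0 := by
    rw [← isUnit_iff_ne_zero, ← isUnit_iff_isUnit_det, ← linearIndependent_cols_iff_isUnit]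
    exact (linearIndependent_mulShift hψ).comp _ neg_injective
  have h := congrArg det (circulant_mul_mulShift_neg ψ c)
  rw [det_mul, det_mul, det_diagonal, mul_comm] at h
  exact mul_left_cancel₀ hW h

end CommRing

section ZMod

variable {R : Type*} [CommRing R] {n : ℕ} [NeZero n]

theorem map_mul_eq_pow_val (ψ : AddChar (ZMod n) R) (w x : ZMod n) : ψ (w * x) = ψ x ^ w.val := by
  rw [← map_nsmul_eq_pow, nsmul_eq_mul, ZMod.natCast_zmod_val]

theorem sum_ite_mul_eq_sum_Ico (ψ : AddChar (ZMod n) R) (r : ℕ) (x : ZMod n) :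
    ∑ w : ZMod n, (if r < min w.val (n - w.val) then 1 else 0) * ψ (w * x) =
      ∑ k ∈ Ico (r + 1) (n - r), ψ x ^ k := by
  simp_rw [map_mul_eq_pow_val, ite_mul, one_mul, zero_mul]
  rw [ZMod.sum_val_eq_sum_range fun k => if r < min k (n - k) then ψ x ^ k else 0, ← sum_filter]
  congr 1
  ext k
  simp only [mem_filter, mem_range, mem_Ico, lt_min_iff]
  omega

theorem IsPrimitive.sum_Ico_pow_ne_zero_iff {K : Type*} [Field K] [CharZero K]
    {ψ : AddChar (ZMod n) K} (hψ : ψ.IsPrimitive) {r : ℕ} (hrn : 2 * r + 1 < n) (x : ZMod n) :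
    ∑ k ∈ Ico (r + 1) (n - r), ψ x ^ k ≠ 0 ↔ ((2 * r + 1 : ℕ) : ZMod n) * x = 0 → x = 0 := by
  have hψn : ψ x ^ n = 1 := by
    rw [← map_nsmul_eq_pow, nsmul_eq_mul, ZMod.natCast_self, zero_mul, map_zero_eq_one]
  rw [ne_eq, sum_Ico_pow_eq_zero_iff hψn hrn, ← map_nsmul_eq_pow, nsmul_eq_mul,
    hψ.zmod_char_eq_one_iff, ne_eq, hψ.zmod_char_eq_one_iff]
  tauto

end ZMod

end AddChar

theorem complement_power_of_cycle_nonsingular_iff_general (n r : ℕ) [NeZero n]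
    (hrn : r < n / 2) :
    (Matrix.of fun u v : ZMod n =>
        if r < min (u - v).val (n - (u - v).val) then (1 : ℚ) else 0).det ≠ 0 ↔
      Nat.gcd n (2 * r + 1) = 1 := by
  set c : ZMod n → ℚ := fun w => if r < min w.val (n - w.val) then 1 else 0
  have hψ := ZMod.isPrimitive_stdAddChar n
  change (circulant c).det ≠ 0 ↔ _
  rw [← (algebraMap ℚ ℂ).injective.ne_iff, map_zero, RingHom.map_det, RingHom.mapMatrix_apply,
    map_circulant, AddChar.det_circulant_eq_prod hψ, prod_ne_zero_iff]
  simp only [c, apply_ite, map_one, map_zero, AddChar.sum_ite_mul_eq_sum_Ico,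
    hψ.sum_Ico_pow_ne_zero_iff (by omega : 2 * r + 1 < n), mem_univ, true_implies]
  rw [← mem_nonZeroDivisors_iff_left, ← isUnit_iff_mem_nonZeroDivisors_of_finite,
    ZMod.isUnit_iff_coprime, Nat.coprime_comm, Nat.Coprime]

/-- The complement `(C_n^{(r)})^c` of the `r`-th power of the cycle is
non-singular iff `gcd(n, 2r+1) = 1`. -/
theorem complement_power_of_cycle_nonsingular_iff (n r : ℕ) [NeZero n]
    (hn : 3 ≤ n) (hr : 1 ≤ r) (hrn : r < n / 2) :
    (Matrix.of fun u v : ZMod n =>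
        if r < min (u - v).val (n - (u - v).val) then (1 : ℚ) else 0).det ≠ 0 ↔
      Nat.gcd n (2 * r + 1) = 1 :=
  complement_power_of_cycle_nonsingular_iff_general n r hrn
end

section
/- Let n and r be positive integers with 1 ≤ r < n. The circulant graph C(2n, r) on 2n vertices, whose adjacency matrix is circulant with first row [0, 1...1 (r times), 0...0 (n−r−1 times), 1, 0...0 (n−r−1 times), 1...1 (r times)], is singular if and only if gcd(n, 2r+1) ≥ 3. -/
/-!
The adjacency matrix is circulant, so its eigenvalues are the values of the representer
polynomial `λ` at the `2n`-th roots of unity `ω`, and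
`(ω - 1) ω^r λ(ω) = (ω^(2r+1) - 1) + (ω^n - 1) (ω^(r+1) - ω^r)`.
If `ω^n = 1`, then `λ(ω) = 0` says that `ω ≠ 1` is a common root of `x^n - 1` and `x^(2r+1) - 1`,
i.e. that the odd number `gcd(n, 2r+1)` is not `1`.
If `ω^n = -1`, then `λ(ω) = 0` says `ω^(2r+1) - 1 = 2 ω^r (ω - 1)`. This relation passes to every
Galois conjugate of `ω` and puts each of them within distance `1` of `1`, which happens for all
primitive `d`-th roots of unity only when `d = 1` or `d = 6`; then `3` divides `n` and `2r+1`.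
-/

open Polynomial Finset Complex
open scoped Real

theorem ZMod.sum_comp_val {M : Type*} [AddCommMonoid M] {N : ℕ} [NeZero N] (f : ℕ → M) :
    ∑ u : ZMod N, f u.val = ∑ v ∈ range N, f v := by
  obtain ⟨N, rfl⟩ := Nat.exists_eq_succ_of_ne_zero (NeZero.ne N)
  exact Fin.sum_univ_eq_sum_range f (N + 1)

namespace Matrix

variable {R : Type*} [CommRing R] [IsDomain R] {N : ℕ} [NeZero N] {ζ : R}

theorem det_circulant (hζ : IsPrimitiveRoot ζ N) (c : ZMod N → R) :
    (circulant c).det = ∏ k : ZMod N, ∑ u : ZMod N, c u * (ζ ^ k.val) ^ u.val := by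
  set V : Matrix (ZMod N) (ZMod N) R := of fun i k => (ζ ^ k.val) ^ i.val
  have hV : V.det ≠ 0 := by
    obtain ⟨N, rfl⟩ := Nat.exists_eq_succ_of_ne_zero (NeZero.ne N)
    rw [← det_transpose]
    exact det_vandermonde_ne_zero_iff.mpr fun i j (hij : ζ ^ i.val = ζ ^ j.val) =>
      Fin.ext (hζ.pow_inj i.isLt j.isLt hij)
  have hdiag : (circulant c)ᵀ * V = V * diagonal fun k => ∑ u, c u * (ζ ^ k.val) ^ u.val := by
    ext i k
    have hk : (ζ ^ k.val) ^ N = 1 := by rw [pow_right_comm, hζ.pow_eq_one, one_pow]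
    rw [mul_diagonal]
    simp only [mul_apply, transpose_apply, circulant_apply, V, of_apply, mul_sum]
    rw [← Equiv.sum_comp (Equiv.addLeft i)]
    refine sum_congr rfl fun u _ => ?_
    rw [Equiv.coe_addLeft, add_sub_cancel_left, ZMod.val_add, ← pow_eq_pow_mod _ hk, pow_add]
    ring
  have := congrArg det hdiag
  rw [det_mul, det_mul, det_diagonal, det_transpose, mul_comm] at this
  exact mul_left_cancel₀ hV this

theorem det_circulant_eq_zero_iff (hζ : IsPrimitiveRoot ζ N) (c : ZMod N → R) :
    (circulant c).det = 0 ↔ ∃ ω : R, ω ^ N = 1 ∧ ∑ u : ZMod N, c u * ω ^ u.val = 0 := by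
  simp only [det_circulant hζ, prod_eq_zero_iff, mem_univ, true_and]
  constructor
  · rintro ⟨k, hk⟩
    exact ⟨ζ ^ k.val, by rw [pow_right_comm, hζ.pow_eq_one, one_pow], hk⟩
  · rintro ⟨ω, hω, hzero⟩
    obtain ⟨i, hi, rfl⟩ := hζ.eq_pow_of_pow_eq_one hω
    exact ⟨i, by rwa [ZMod.val_cast_of_lt hi]⟩

end Matrix

theorem IsPrimitiveRoot.aeval_eq_zero_of_aeval_eq_zero {K : Type*} [Field K] [CharZero K]
    {d : ℕ} (hd : 0 < d) {ω η : K} (hω : IsPrimitiveRoot ω d) (hη : IsPrimitiveRoot η d)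
    {P : ℚ[X]} (hP : aeval ω P = 0) : aeval η P = 0 := by
  obtain ⟨Q, rfl⟩ : minpoly ℚ η ∣ P := by
    rw [← cyclotomic_eq_minpoly_rat hη hd, cyclotomic_eq_minpoly_rat hω hd]
    exact minpoly.dvd ℚ ω hP
  rw [map_mul, minpoly.aeval, zero_mul]

theorem Nat.exists_coprime_sixth_lt_le_half {d : ℕ} (hd : 0 < d) (hd1 : d ≠ 1) (hd6 : d ≠ 6) :
    ∃ a, a.Coprime d ∧ d < 6 * a ∧ 2 * a ≤ d := by
  obtain ⟨a, b, rfl, hb, hab⟩ : ∃ a b, d = a * 2 + b ∧ 3 * b < 2 * d ∧ a.Coprime b := by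
    obtain ⟨k, rfl | rfl | rfl | rfl⟩ : ∃ k, d = 4 * k ∨ d = 4 * k + 1 ∨ d = 4 * k + 2 ∨
        d = 4 * k + 3 := ⟨d / 4, by omega⟩
    · refine ⟨2 * k - 1, 2, by omega, by omega, Nat.coprime_two_right.2 ⟨k - 1, by omega⟩⟩
    · exact ⟨2 * k, 1, by omega, by omega, Nat.coprime_one_right _⟩
    · rcases Nat.lt_or_ge k 2 with hk | hk
      · exact ⟨1, 0, by omega, by omega, Nat.coprime_one_left _⟩
      · refine ⟨2 * k - 1, 4, by omega, by omega, ?_⟩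
        exact (Nat.coprime_two_right.2 ⟨k - 1, by omega⟩).pow_right 2
    · exact ⟨2 * k + 1, 1, by omega, by omega, Nat.coprime_one_right _⟩
  exact ⟨a, (Nat.coprime_mul_left_add_right a b 2).2 hab, by omega, by omega⟩

theorem Complex.one_lt_norm_exp_sub_one {a d : ℕ} (h6 : d < 6 * a) (h2 : 2 * a ≤ d) :
    1 < ‖exp (2 * π * I * (a / d)) - 1‖ := by
  have hd : (0 : ℝ) < d := by exact_mod_cast (show 0 < d by omega)
  have hexp : 2 * π * I * (a / d) = I * ↑(2 * π * a / d) := by push_cast; ring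
  rw [hexp, norm_exp_I_mul_ofReal_sub_one, norm_mul, Real.norm_two, Real.norm_eq_abs,
    show 2 * π * a / d / 2 = π * a / d by ring]
  have hlow : π / 6 < π * a / d := by
    rw [lt_div_iff₀ hd]
    have : (d : ℝ) < 6 * a := by exact_mod_cast h6
    nlinarith [Real.pi_pos]
  have hhigh : π * a / d ≤ π / 2 := by
    rw [div_le_iff₀ hd]
    have : 2 * (a : ℝ) ≤ d := by exact_mod_cast h2
    nlinarith [Real.pi_pos]
  have := Real.sin_lt_sin_of_lt_of_le_pi_div_two (by linarith [Real.pi_pos]) hhigh hlow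
  rw [Real.sin_pi_div_six] at this
  rw [abs_of_pos (by linarith)]
  linarith

theorem Complex.norm_sub_one_le_one_of_pow_sub_one_eq {z : ℂ} (hz : ‖z‖ = 1) {m s : ℕ}
    (h : z ^ m - 1 = 2 * z ^ s * (z - 1)) : ‖z - 1‖ ≤ 1 := by
  have h1 : ‖z ^ m - 1‖ = 2 * ‖z - 1‖ := by simp [h, hz]
  have h2 : ‖z ^ m - 1‖ ≤ 2 := (norm_sub_le _ _).trans (by simp [hz]; norm_num)
  linarith

theorem IsPrimitiveRoot.eq_one_or_eq_six {d : ℕ} (hd : 0 < d) {ω : ℂ} (hω : IsPrimitiveRoot ω d)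
    {m s : ℕ} (h : ω ^ m - 1 = 2 * ω ^ s * (ω - 1)) : d = 1 ∨ d = 6 := by
  by_contra! hne
  obtain ⟨a, hcop, h6, h2⟩ := Nat.exists_coprime_sixth_lt_le_half hd hne.1 hne.2
  have hη := isPrimitiveRoot_exp_of_coprime a d hd.ne' hcop
  have hP : aeval ω (X ^ m - 1 - 2 * X ^ s * (X - 1) : ℚ[X]) = 0 := by
    simpa only [map_sub, map_mul, map_pow, aeval_X, map_one, map_ofNat, sub_eq_zero]
  have hηP := hω.aeval_eq_zero_of_aeval_eq_zero hd hη hP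
  simp only [map_sub, map_mul, map_pow, aeval_X, map_one, map_ofNat, sub_eq_zero] at hηP
  exact (one_lt_norm_exp_sub_one h6 h2).not_ge
    (norm_sub_one_le_one_of_pow_sub_one_eq (norm_eq_one_of_pow_eq_one hη.pow_eq_one hd.ne') hηP)

theorem IsPrimitiveRoot.norm_sub_one_eq_one_of_six {ω : ℂ} (hω : IsPrimitiveRoot ω 6) :
    ‖ω - 1‖ = 1 := by
  have hroot := hω.isRoot_cyclotomic (by norm_num)
  rw [cyclotomic_six, IsRoot.def, eval_add, eval_sub, eval_pow, eval_X, eval_one] at hroot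
  rw [show ω - 1 = ω ^ 2 by linear_combination -hroot, norm_pow,
    norm_eq_one_of_pow_eq_one hω.pow_eq_one (by norm_num), one_pow]

theorem Complex.eq_neg_one_of_norm_sub_one_eq_two {z : ℂ} (hz : ‖z‖ = 1) (h : ‖z - 1‖ = 2) :
    z = -1 := by
  have := parallelogram_law_with_norm ℝ z 1
  rw [hz, h, norm_one] at this
  rw [eq_neg_iff_add_eq_zero, ← norm_eq_zero]
  nlinarith [norm_nonneg (z + 1)]

namespace C2nr

variable {R : Type*} [CommRing R]

def representer (n r : ℕ) (x : R) : R :=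
  ∑ v ∈ Ico 1 (r + 1), x ^ v + x ^ n + ∑ v ∈ Ico (2 * n - r) (2 * n), x ^ v

theorem sum_ite_mul_pow_val {n r : ℕ} [NeZero (2 * n)] (hrn : r < n) (x : R) :
    ∑ u : ZMod (2 * n), (if (1 ≤ u.val ∧ u.val ≤ r) ∨ u.val = n ∨ 2 * n - r ≤ u.val
      then (1 : R) else 0) * x ^ u.val = representer n r x := by
  rw [ZMod.sum_comp_val fun v => (if (1 ≤ v ∧ v ≤ r) ∨ v = n ∨ 2 * n - r ≤ v
    then (1 : R) else 0) * x ^ v]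
  simp only [ite_mul, one_mul, zero_mul]
  rw [← sum_filter]
  have hsplit : (range (2 * n)).filter (fun v => (1 ≤ v ∧ v ≤ r) ∨ v = n ∨ 2 * n - r ≤ v) =
      (Ico 1 (r + 1) ∪ {n}) ∪ Ico (2 * n - r) (2 * n) := by
    ext v
    simp only [mem_filter, mem_range, mem_union, mem_Ico, mem_singleton]
    omega
  rw [hsplit, sum_union, sum_union, sum_singleton, representer]
  · simp only [disjoint_singleton_right, mem_Ico]; omega
  · rw [disjoint_left]
    simp only [mem_union, mem_Ico, mem_singleton]
    omega

theorem representer_one {n r : ℕ} (hr : r ≤ 2 * n) : representer n r (1 : R) = 2 * r + 1 := by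
  simp only [representer, one_pow, sum_const, Nat.card_Ico, nsmul_one]
  rw [Nat.add_sub_cancel, Nat.sub_sub_self hr]
  ring

theorem sub_one_mul_pow_mul_representer {n r : ℕ} (hr : r ≤ 2 * n) {ω : R}
    (hω : ω ^ (2 * n) = 1) :
    (ω - 1) * ω ^ r * representer n r ω =
      (ω ^ (2 * r + 1) - 1) + (ω ^ n - 1) * (ω ^ (r + 1) - ω ^ r) := by
  have hlow := geom_sum_Ico_mul ω (Nat.le_add_left 1 r)
  have hhigh := geom_sum_Ico_mul ω (Nat.sub_le (2 * n) r)
  have hcancel : ω ^ r * ω ^ (2 * n - r) = 1 := by rw [← pow_add, Nat.add_sub_cancel' hr, hω]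
  rw [hω] at hhigh
  rw [representer]
  linear_combination ω ^ r * hlow + ω ^ r * hhigh - hcancel

theorem three_dvd_of_pow_eq_neg_one {ω : ℂ} {n m s : ℕ} (hn : ω ^ n = -1)
    (h : ω ^ m - 1 = 2 * ω ^ s * (ω - 1)) : 3 ∣ n ∧ 3 ∣ m := by
  have hn0 : n ≠ 0 := by rintro rfl; norm_num at hn
  have h2n : ω ^ (2 * n) = 1 := by rw [pow_mul', hn]; norm_num
  have hfin : IsOfFinOrder ω := isOfFinOrder_iff_pow_eq_one.2 ⟨2 * n, by omega, h2n⟩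
  have hprim := IsPrimitiveRoot.orderOf ω
  rcases hprim.eq_one_or_eq_six hfin.orderOf_pos h with h1 | h6
  · rw [orderOf_eq_one_iff.1 h1, one_pow] at hn
    norm_num at hn
  rw [h6] at hprim
  have hnorm : ‖ω‖ = 1 := norm_eq_one_of_pow_eq_one hprim.pow_eq_one (by norm_num)
  have hm : ω ^ m = -1 := by
    refine eq_neg_one_of_norm_sub_one_eq_two (by rw [norm_pow, hnorm, one_pow]) ?_
    rw [h, norm_mul, norm_mul, norm_pow, hnorm, hprim.norm_sub_one_eq_one_of_six]
    norm_num
  have h2m : ω ^ (2 * m) = 1 := by rw [pow_mul', hm]; norm_num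
  have := hprim.dvd_of_pow_eq_one _ h2n
  have := hprim.dvd_of_pow_eq_one _ h2m
  omega

theorem three_le_gcd_of_representer_eq_zero {n r : ℕ} (hrn : r < n) {ω : ℂ}
    (hω : ω ^ (2 * n) = 1) (h : representer n r ω = 0) : 3 ≤ n.gcd (2 * r + 1) := by
  have hω1 : ω ≠ 1 := by
    rintro rfl
    rw [representer_one (by omega)] at h
    norm_cast at h
  have key := sub_one_mul_pow_mul_representer (r := r) (by omega) hω
  rw [h, mul_zero] at key
  have hpos : 0 < n.gcd (2 * r + 1) := Nat.gcd_pos_of_pos_left _ (by omega)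
  rcases sq_eq_one_iff.1 (by rwa [← pow_mul'] : (ω ^ n) ^ 2 = 1) with hn | hn
  · have hm : ω ^ (2 * r + 1) = 1 := by linear_combination -key - (ω ^ (r + 1) - ω ^ r) * hn
    have hg1 : n.gcd (2 * r + 1) ≠ 1 := by
      intro hg
      exact hω1 (by simpa [hg] using pow_gcd_eq_one.2 ⟨hn, hm⟩)
    have hodd := Nat.odd_iff.1 ((odd_two_mul_add_one r).of_dvd_nat (Nat.gcd_dvd_right n _))
    omega
  · have hE : ω ^ (2 * r + 1) - 1 = 2 * ω ^ r * (ω - 1) := by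
      linear_combination -key - (ω ^ (r + 1) - ω ^ r) * hn + 2 * pow_succ ω r
    obtain ⟨h3n, h3m⟩ := three_dvd_of_pow_eq_neg_one hn hE
    exact Nat.le_of_dvd hpos (Nat.dvd_gcd h3n h3m)

theorem exists_representer_eq_zero_of_three_le_gcd {n r : ℕ} (hrn : r < n)
    (hg : 3 ≤ n.gcd (2 * r + 1)) : ∃ ω : ℂ, ω ^ (2 * n) = 1 ∧ representer n r ω = 0 := by
  have hprim := isPrimitiveRoot_exp (n.gcd (2 * r + 1)) (by omega)
  set ω := exp (2 * π * I / n.gcd (2 * r + 1))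
  have hn : ω ^ n = 1 := (hprim.pow_eq_one_iff_dvd n).2 (Nat.gcd_dvd_left _ _)
  have hm : ω ^ (2 * r + 1) = 1 := (hprim.pow_eq_one_iff_dvd _).2 (Nat.gcd_dvd_right _ _)
  have h2n : ω ^ (2 * n) = 1 := by rw [pow_mul', hn, one_pow]
  refine ⟨ω, h2n, ?_⟩
  have key := sub_one_mul_pow_mul_representer (r := r) (by omega) h2n
  rw [hn, hm, sub_self, zero_mul, add_zero] at key
  have hne : (ω - 1) * ω ^ r ≠ 0 := mul_ne_zero (sub_ne_zero.2 (hprim.ne_one (by omega)))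
    (pow_ne_zero _ (hprim.ne_zero (by omega)))
  exact (mul_eq_zero.1 key).resolve_left hne

end C2nr

open Matrix C2nr in
theorem C2nr_singular_iff_general (n r : ℕ) [NeZero (2 * n)] (hrn : r < n) :
    (Matrix.of fun i j : ZMod (2 * n) =>
        if (1 ≤ (j - i).val ∧ (j - i).val ≤ r) ∨ (j - i).val = n ∨
            2 * n - r ≤ (j - i).val then (1 : ℚ) else 0).det = 0 ↔
      3 ≤ Nat.gcd n (2 * r + 1) := by
  set c : ZMod (2 * n) → ℚ := fun u =>
    if (1 ≤ u.val ∧ u.val ≤ r) ∨ u.val = n ∨ 2 * n - r ≤ u.val then 1 else 0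
  change (circulant c)ᵀ.det = 0 ↔ _
  rw [det_transpose, ← map_eq_zero_iff _ (algebraMap ℚ ℂ).injective, RingHom.map_det,
    RingHom.mapMatrix_apply, map_circulant,
    det_circulant_eq_zero_iff (isPrimitiveRoot_exp (2 * n) (NeZero.ne _))]
  simp only [c, apply_ite (algebraMap ℚ ℂ), map_one, map_zero, sum_ite_mul_pow_val hrn]
  exact ⟨fun ⟨_, hω, h⟩ => three_le_gcd_of_representer_eq_zero hrn hω h,
    exists_representer_eq_zero_of_three_le_gcd hrn⟩

/-- The circulant graph `C(2n, r)` on `2n` vertices, with first row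
`[0, 1^r, 0^{n-r-1}, 1, 0^{n-r-1}, 1^r]`, is singular iff `gcd(n, 2r+1) ≥ 3`. -/
theorem C2nr_singular_iff (n r : ℕ) [NeZero (2 * n)] (hr : 1 ≤ r) (hrn : r < n) :
    (Matrix.of fun i j : ZMod (2 * n) =>
        if (1 ≤ (j - i).val ∧ (j - i).val ≤ r) ∨ (j - i).val = n ∨
            2 * n - r ≤ (j - i).val then (1 : ℚ) else 0).det = 0 ↔
      3 ≤ Nat.gcd n (2 * r + 1) :=
  C2nr_singular_iff_general n r hrn
end

section
/- Let X be the (r,s,t)-element circulant digraph on n vertices with gcd(n, s) = 1. If there exists an integer d ≥ 2 with d dividing n and d dividing t, and s = ℓr for some positive integer ℓ ≡ −1 (mod d), then X is singular. -/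
open Finset Matrix

/-- If `gcd(n,s) = 1` and there are `d ≥ 2` with `d ∣ n`, `d ∣ t` and
`s = ℓ·r` for some positive `ℓ ≡ -1 (mod d)`, then the `(r,s,t)`-element
circulant digraph on `n` vertices is singular. -/
theorem rst_circulant_singular_case1 (n r s t d ℓ : ℕ) [NeZero n]
    (hsum : r + s + t ≤ n) (hns : Nat.gcd n s = 1)
    (hd : 2 ≤ d) (hdn : d ∣ n) (hdt : d ∣ t)
    (hℓ : 0 < ℓ) (hsr : s = ℓ * r) (hmod : (ℓ + 1) % d = 0) :
    (Matrix.of fun i j : ZMod n =>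
        if (j - i).val < r ∨ (r + t ≤ (j - i).val ∧ (j - i).val < r + t + s)
        then (1 : ℚ) else 0).det = 0 := by
  have hn : 0 < n := Nat.pos_of_neZero n
  -- a primitive d-th root of unity in ℂ
  obtain ⟨ζ, hζ⟩ : ∃ ζ : ℂ, IsPrimitiveRoot ζ d :=
    ⟨_, Complex.isPrimitiveRoot_exp d (by omega)⟩
  have hζd : ζ ^ d = 1 := hζ.pow_eq_one
  have hζn : ζ ^ n = 1 := by obtain ⟨c, rfl⟩ := hdn; rw [pow_mul, hζd, one_pow]
  have hζt : ζ ^ t = 1 := by obtain ⟨c, rfl⟩ := hdt; rw [pow_mul, hζd, one_pow]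
  have hζrs : ζ ^ (r + s) = 1 := by
    have hdrs : d ∣ r + s := by
      have h1 : d ∣ ℓ + 1 := Nat.dvd_of_mod_eq_zero hmod
      have h2 : r + s = (ℓ + 1) * r := by rw [hsr]; ring
      rw [h2]; exact h1.mul_right r
    obtain ⟨c, hc⟩ := hdrs; rw [hc, pow_mul, hζd, one_pow]
  have hζ1 : ζ ≠ 1 := hζ.ne_one (by omega)
  have hpow : ∀ m : ℕ, ζ ^ (m % n) = ζ ^ m := by
    intro m
    conv_rhs => rw [← Nat.mod_add_div m n]
    rw [pow_add, pow_mul, hζn, one_pow, mul_one]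
  -- the eigenvalue sum vanishes
  have hTval : (∑ m ∈ range n,
      (if m < r ∨ (r + t ≤ m ∧ m < r + t + s) then ζ ^ m else 0)) = 0 := by
    have hfilter : (range n).filter (fun m => m < r ∨ (r + t ≤ m ∧ m < r + t + s))
        = range r ∪ Ico (r + t) (r + t + s) := by
      ext m
      simp only [mem_filter, mem_range, mem_union, mem_Ico]
      omega
    have hdisj : Disjoint (range r) (Ico (r + t) (r + t + s)) := by
      rw [disjoint_left]; intro a ha hb
      simp only [mem_range] at ha
      simp only [mem_Ico] at hb
      omega
    rw [sum_ite, sum_const_zero, add_zero, hfilter, sum_union hdisj]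
    have h2 : ∑ m ∈ Ico (r + t) (r + t + s), ζ ^ m
        = ζ ^ (r + t) * ∑ m ∈ range s, ζ ^ m := by
      rw [show r + t + s = s + (r + t) by ring, Finset.sum_Ico_eq_sum_range]
      simp only [add_tsub_cancel_right, Finset.mul_sum]
      refine Finset.sum_congr rfl fun m _ => ?_
      rw [← pow_add]
    rw [h2]
    have key : ((∑ m ∈ range r, ζ ^ m) + ζ ^ (r + t) * ∑ m ∈ range s, ζ ^ m) * (ζ - 1) = 0 := by
      rw [add_mul, geom_sum_mul, mul_assoc, geom_sum_mul, mul_sub, mul_one, ← pow_add]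
      have e1 : ζ ^ (r + t + s) = 1 := by
        rw [show r + t + s = (r + s) + t by ring, pow_add, hζrs, hζt, one_mul]
      have e2 : ζ ^ (r + t) = ζ ^ r := by rw [pow_add, hζt, mul_one]
      rw [e1, e2]; ring
    rcases mul_eq_zero.mp key with h | h
    · exact h
    · exact absurd (sub_eq_zero.mp h) hζ1
  -- the complex version of the matrix is singular
  have hdetC : (Matrix.of fun i j : ZMod n =>
      if (j - i).val < r ∨ (r + t ≤ (j - i).val ∧ (j - i).val < r + t + s)
      then (1 : ℂ) else 0).det = 0 := by
    rw [← Matrix.exists_mulVec_eq_zero_iff]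
    refine ⟨fun j => ζ ^ j.val, ?_, ?_⟩
    · intro h
      have h0 := congrFun h 0
      simp only [ZMod.val_zero, pow_zero, Pi.zero_apply] at h0
      exact one_ne_zero h0
    · funext i
      simp only [Matrix.mulVec, dotProduct, Matrix.of_apply, Pi.zero_apply]
      calc ∑ j : ZMod n, (if (j - i).val < r ∨ (r + t ≤ (j - i).val ∧ (j - i).val < r + t + s)
              then (1 : ℂ) else 0) * ζ ^ j.val
          = ∑ k : ZMod n, (if k.val < r ∨ (r + t ≤ k.val ∧ k.val < r + t + s)
              then (1 : ℂ) else 0) * (ζ ^ i.val * ζ ^ k.val) := by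
            rw [← Equiv.sum_comp (Equiv.addLeft i)
              (fun j => (if (j - i).val < r ∨ (r + t ≤ (j - i).val ∧ (j - i).val < r + t + s)
                then (1 : ℂ) else 0) * ζ ^ j.val)]
            refine Finset.sum_congr rfl fun k _ => ?_
            have hk : (Equiv.addLeft i) k - i = k := by
              simp
            have hv : ζ ^ ((Equiv.addLeft i) k).val = ζ ^ i.val * ζ ^ k.val := by
              have : ((Equiv.addLeft i) k).val = (i.val + k.val) % n := by
                simp [Equiv.addLeft, ZMod.val_add]
            
              rw [this, hpow, pow_add]
            rw [hk, hv]
        _ = ζ ^ i.val * ∑ k : ZMod n, (if k.val < r ∨ (r + t ≤ k.val ∧ k.val < r + t + s)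
              then ζ ^ k.val else 0) := by
            rw [Finset.mul_sum]
            refine Finset.sum_congr rfl fun k _ => ?_
            split <;> ring
        _ = ζ ^ i.val * ∑ m ∈ range n,
              (if m < r ∨ (r + t ≤ m ∧ m < r + t + s) then ζ ^ m else 0) := by
            congr 1
            refine Finset.sum_nbij' (fun k => k.val) (fun m => (m : ZMod n)) ?_ ?_ ?_ ?_ ?_
            · intro k _; exact mem_range.mpr (ZMod.val_lt k)
            · intro m _; exact mem_univ _
            · intro k _; exact ZMod.natCast_rightInverse k
            · intro m hm; exact ZMod.val_cast_of_lt (mem_range.mp hm)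
            · intro k _; rfl
        _ = 0 := by rw [hTval, mul_zero]
  -- transfer back to ℚ
  have hmap : ((Matrix.of fun i j : ZMod n =>
      if (j - i).val < r ∨ (r + t ≤ (j - i).val ∧ (j - i).val < r + t + s)
      then (1 : ℚ) else 0).map (algebraMap ℚ ℂ))
      = (Matrix.of fun i j : ZMod n =>
      if (j - i).val < r ∨ (r + t ≤ (j - i).val ∧ (j - i).val < r + t + s)
      then (1 : ℂ) else 0) := by
    ext i j
    simp [Matrix.map_apply, apply_ite (algebraMap ℚ ℂ)]
  have := RingHom.map_det (algebraMap ℚ ℂ) (Matrix.of fun i j : ZMod n =>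
      if (j - i).val < r ∨ (r + t ≤ (j - i).val ∧ (j - i).val < r + t + s)
      then (1 : ℚ) else 0)
  rw [RingHom.mapMatrix_apply, hmap, hdetC] at this
  exact (map_eq_zero_iff _ (algebraMap ℚ ℂ).injective).mp this
end

section
/- Let X be the (r,s,t)-element circulant digraph on an even number n of vertices with gcd(n, s) = 1. If there exists an even positive integer d dividing n such that r + t is an odd multiple of d/2, and s = ℓr for some positive integer ℓ ≡ 1 (mod d), then X is singular. -/
open Finset

/-!
Let `ω` be a primitive `d`-th root of unity. Then `ω^n = 1`, `ω^(r+t) = -1` because `r + t` is an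
odd multiple of `d/2`, and `ω^s = ω^r` because `ℓ ≡ 1 (mod d)`. Hence
`(ω - 1) γ(ω) = (ω^r - 1) + ω^(r+t) (ω^s - 1) = 0`, so `γ(ω) = 0`, and the vector `(ω^j)_j`
lies in the kernel of the adjacency matrix.
-/

theorem IsPrimitiveRoot.pow_half_eq_neg_one {R : Type*} [CommRing R] [NoZeroDivisors R]
    {ζ : R} {e : ℕ} (h : IsPrimitiveRoot ζ (e + e)) (he : e ≠ 0) : ζ ^ e = -1 := by
  have h2 := h.pow_of_dvd he ⟨2, by ring⟩
  rw [← two_mul, Nat.mul_div_cancel _ (Nat.pos_of_ne_zero he)] at h2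
  exact h2.eq_neg_one_of_two_right

namespace ZMod

variable {n : ℕ} [NeZero n]

theorem pow_val_add {M : Type*} [Monoid M] {ζ : M} (hζ : ζ ^ n = 1) (a b : ZMod n) :
    ζ ^ (a + b).val = ζ ^ a.val * ζ ^ b.val := by
  rw [val_add, ← pow_eq_pow_mod _ hζ, pow_add]

theorem sum_univ_comp_val {M : Type*} [AddCommMonoid M] (g : ℕ → M) :
    ∑ k : ZMod n, g k.val = ∑ k ∈ range n, g k := by
  refine sum_nbij' val (fun k => (k : ZMod n)) (fun k _ => mem_range.mpr k.val_lt)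
    (fun _ _ => mem_univ _) (fun k _ => natCast_zmod_val k)
    (fun k hk => val_cast_of_lt (mem_range.mp hk)) (fun _ _ => rfl)

end ZMod

theorem Matrix.det_circulant_eq_zero_of_sum_eq_zero {R : Type*} [CommRing R] [IsDomain R]
    {n : ℕ} [NeZero n] (v : ZMod n → R) {ζ : R} (hζ : ζ ^ n = 1)
    (h : ∑ k, v k * ζ ^ k.val = 0) : (circulant v).det = 0 := by
  refine exists_vecMul_eq_zero_iff.mp ⟨fun i => ζ ^ i.val, fun h0 => ?_, funext fun j => ?_⟩
  · simpa using congrFun h0 0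
  · calc ∑ i, ζ ^ i.val * v (i - j)
        = ∑ k, ζ ^ (k + j).val * v k :=
          Fintype.sum_equiv (Equiv.subRight j) _ _ fun i => by simp
      _ = ζ ^ j.val * ∑ k, v k * ζ ^ k.val := by
          simp only [ZMod.pow_val_add hζ, mul_sum]
          exact sum_congr rfl fun _ _ => by ring
      _ = 0 := by rw [h, mul_zero]

section RST

variable {R : Type*} [CommRing R] (r s t : ℕ)

theorem sum_zmod_rst_pow_val (n : ℕ) [NeZero n] (hsum : r + s + t ≤ n) (x : R) :
    ∑ k : ZMod n,
        (if k.val < r ∨ (r + t ≤ k.val ∧ k.val < r + t + s) then x ^ k.val else 0) =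
      ∑ k ∈ range r, x ^ k + ∑ k ∈ Ico (r + t) (r + t + s), x ^ k := by
  have hsupp : (range n).filter (fun k => k < r ∨ (r + t ≤ k ∧ k < r + t + s)) =
      range r ∪ Ico (r + t) (r + t + s) := by
    ext k
    simp only [mem_filter, mem_range, mem_union, mem_Ico]
    omega
  have hdisj : Disjoint (range r) (Ico (r + t) (r + t + s)) := by
    simp only [disjoint_left, mem_range, mem_Ico]
    omega
  rw [ZMod.sum_univ_comp_val
      (fun k => if k < r ∨ (r + t ≤ k ∧ k < r + t + s) then x ^ k else 0),
    ← sum_filter, hsupp,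
    sum_union hdisj]

theorem sub_one_mul_rst_sum (x : R) :
    (x - 1) * (∑ k ∈ range r, x ^ k + ∑ k ∈ Ico (r + t) (r + t + s), x ^ k) =
      (x ^ r - 1) + x ^ (r + t) * (x ^ s - 1) := by
  rw [sum_Ico_eq_sum_range, Nat.add_sub_cancel_left]
  simp only [pow_add, ← mul_sum]
  linear_combination mul_geom_sum x r + x ^ r * x ^ t * mul_geom_sum x s

theorem rst_sum_eq_zero [IsDomain R] {x : R} (hx : x ≠ 1) (hrt : x ^ (r + t) = -1)
    (hs : x ^ s = x ^ r) :
    ∑ k ∈ range r, x ^ k + ∑ k ∈ Ico (r + t) (r + t + s), x ^ k = 0 := by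
  refine (mul_eq_zero.mp ?_).resolve_left (sub_ne_zero.mpr hx)
  rw [sub_one_mul_rst_sum, hrt, hs]
  ring

end RST

theorem rst_circulant_singular_case2_general (n r s t d ℓ : ℕ) [NeZero n]
    (hsum : r + s + t ≤ n)
    (hd : 0 < d) (hdeven : Even d) (hdn : d ∣ n)
    (hrt : ∃ m : ℕ, Odd m ∧ r + t = m * (d / 2))
    (hsr : s = ℓ * r) (hmod : ℓ % d = 1) :
    (Matrix.of fun i j : ZMod n =>
        if (j - i).val < r ∨ (r + t ≤ (j - i).val ∧ (j - i).val < r + t + s)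
        then (1 : ℚ) else 0).det = 0 := by
  obtain ⟨e, rfl⟩ := hdeven
  obtain ⟨m, hm, hrt⟩ := hrt
  rw [show (e + e) / 2 = e by omega] at hrt
  obtain ⟨ω, hω⟩ : ∃ ω : ℂ, IsPrimitiveRoot ω (e + e) :=
    ⟨_, Complex.isPrimitiveRoot_exp _ (by omega)⟩
  have hωrt : ω ^ (r + t) = -1 := by
    rw [hrt, pow_mul', hω.pow_half_eq_neg_one (by omega), hm.neg_one_pow]
  have hωs : ω ^ s = ω ^ r := by
    rw [hsr, pow_mul, pow_eq_pow_mod ℓ hω.pow_eq_one, hmod, pow_one]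
  set v : ZMod n → ℚ := fun k =>
    if k.val < r ∨ (r + t ≤ k.val ∧ k.val < r + t + s) then 1 else 0
  change (Matrix.circulant v).transpose.det = 0
  apply (algebraMap ℚ ℂ).injective
  rw [Matrix.det_transpose, RingHom.map_det, map_zero, RingHom.mapMatrix_apply,
    Matrix.map_circulant]
  refine Matrix.det_circulant_eq_zero_of_sum_eq_zero _ ((hω.pow_eq_one_iff_dvd n).mpr hdn) ?_
  rw [← rst_sum_eq_zero r s t (hω.ne_one (by omega)) hωrt hωs,
    ← sum_zmod_rst_pow_val r s t n hsum]
  refine sum_congr rfl fun k _ => ?_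
  simp only [v]
  split_ifs <;> simp

/-- If `n` is even, `gcd(n,s) = 1`, `d` is an even positive divisor of `n`
such that `r + t` is an odd multiple of `d/2`, and `s = ℓ·r` for a positive
`ℓ ≡ 1 (mod d)`, then the `(r,s,t)`-element circulant digraph is singular. -/
theorem rst_circulant_singular_case2 (n r s t d ℓ : ℕ) [NeZero n]
    (hsum : r + s + t ≤ n) (hneven : Even n) (hns : Nat.gcd n s = 1)
    (hd : 0 < d) (hdeven : Even d) (hdn : d ∣ n)
    (hrt : ∃ m : ℕ, Odd m ∧ r + t = m * (d / 2))
    (hℓ : 0 < ℓ) (hsr : s = ℓ * r) (hmod : ℓ % d = 1) :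
    (Matrix.of fun i j : ZMod n =>
        if (j - i).val < r ∨ (r + t ≤ (j - i).val ∧ (j - i).val < r + t + s)
        then (1 : ℚ) else 0).det = 0 :=
  rst_circulant_singular_case2_general n r s t d ℓ hsum hd hdeven hdn hrt hsr hmod
end

section
/- Let i, j, k, ℓ be non-negative integers with j > ℓ and kj + i + ℓ < n. The circulant digraph C_n^{i,j,k,ℓ} with representer polynomial γ(x) = x^i · (1 + x + ... + x^ℓ) · (1 + x^j + x^{2j} + ... + x^{kj}) is singular if and only if gcd(ℓ+1, n) ≥ 2 or gcd(k+1, n/gcd(n,j)) ≥ 2. -/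
/-!
The DFT matrix `(ψ (-(m * u)))_{u,m}`, `ψ = ZMod.stdAddChar`, conjugates `circulant c` to the
diagonal matrix of the values `∑ d, c d * ψ (d * m)`; so the digraph is singular iff `γ` vanishes
at some `n`-th root of unity `ω = ψ x`. As `ℓ < j` and `k * j + i + ℓ < n`, the exponents
`s + t * j` are distinct mod `n`, hence `γ(ω) = ω^i (1 + ⋯ + ω^ℓ) (1 + ω^j + ⋯ + (ω^j)^k)`.
A geometric sum `1 + ⋯ + (ψ y)^(N-1)` vanishes iff `y ≠ 0` and `N • y = 0`, and a nonzero
multiple `y` of `a` in `ZMod n` with `N • y = 0` exists iff `N` is not coprime to the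
additive order `n / gcd(n, a)` of `a`.
-/

open scoped Classical
open Finset Matrix ZMod

theorem geom_sum_eq_zero_iff {K : Type*} [Field K] [CharZero K] {x : K} {N : ℕ} (hN : N ≠ 0) :
    ∑ r ∈ range N, x ^ r = 0 ↔ x ^ N = 1 ∧ x ≠ 1 := by
  by_cases hx : x = 1
  · simp [hx, hN]
  · rw [geom_sum_eq hx, div_eq_zero_iff, sub_eq_zero, sub_eq_zero]
    tauto

theorem Nat.exists_dvd_mul_and_not_dvd_iff {d N : ℕ} (hd : 0 < d) :
    (∃ m, d ∣ N * m ∧ ¬ d ∣ m) ↔ 2 ≤ N.gcd d := by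
  have hg : 0 < N.gcd d := Nat.gcd_pos_of_pos_right N hd
  constructor
  · rintro ⟨m, hNm, hm⟩
    by_contra! h
    exact hm ((Nat.coprime_comm.mp (show N.gcd d = 1 by omega)).dvd_of_dvd_mul_left hNm)
  · intro h
    have hlt : d / N.gcd d < d := Nat.div_lt_self hd h
    have hpos : 0 < d / N.gcd d := Nat.div_pos (Nat.gcd_le_right _ hd) hg
    refine ⟨d / N.gcd d, ?_, fun hdvd => (Nat.le_of_dvd hpos hdvd).not_gt hlt⟩
    rw [← Nat.mul_div_assoc _ (Nat.gcd_dvd_right N d),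
      Nat.mul_div_right_comm (Nat.gcd_dvd_left N d)]
    exact dvd_mul_left d _

theorem exists_nsmul_nsmul_eq_zero_and_nsmul_ne_zero_iff {G : Type*} [AddMonoid G] {y : G}
    (hy : 0 < addOrderOf y) (N : ℕ) :
    (∃ m : ℕ, N • m • y = 0 ∧ m • y ≠ 0) ↔ 2 ≤ N.gcd (addOrderOf y) := by
  simp_rw [ne_eq, ← mul_nsmul', ← addOrderOf_dvd_iff_nsmul_eq_zero]
  exact Nat.exists_dvd_mul_and_not_dvd_iff hy

theorem Nat.eq_and_eq_of_add_mul_eq_add_mul {i ℓ j s₁ s₂ t₁ t₂ : ℕ} (hℓj : ℓ < j)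
    (hs₁ : s₁ ∈ Icc i (i + ℓ)) (hs₂ : s₂ ∈ Icc i (i + ℓ)) (h : s₁ + t₁ * j = s₂ + t₂ * j) :
    t₁ = t₂ ∧ s₁ = s₂ := by
  rw [mem_Icc] at hs₁ hs₂
  have ht : t₁ = t₂ := by
    rcases lt_trichotomy t₁ t₂ with ht | ht | ht
    · nlinarith
    · exact ht
    · nlinarith
  subst ht
  exact ⟨rfl, by omega⟩

theorem sum_range_sum_Icc_pow {R : Type*} [CommSemiring R] (ω : R) (i j k ℓ : ℕ) :
    ∑ t ∈ range (k + 1), ∑ s ∈ Icc i (i + ℓ), ω ^ (s + t * j) =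
      ω ^ i * (∑ r ∈ range (ℓ + 1), ω ^ r) * ∑ t ∈ range (k + 1), (ω ^ j) ^ t := by
  calc ∑ t ∈ range (k + 1), ∑ s ∈ Icc i (i + ℓ), ω ^ (s + t * j)
      = (∑ s ∈ Icc i (i + ℓ), ω ^ s) * ∑ t ∈ range (k + 1), (ω ^ j) ^ t := by
        simp_rw [mul_sum, sum_mul, pow_add, pow_mul']
    _ = _ := by
        rw [← Ico_add_one_right_eq_Icc, sum_Ico_eq_sum_range, add_assoc, add_tsub_cancel_left]
        simp_rw [pow_add, ← mul_sum]

section ZMod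

variable {n : ℕ}

theorem ZMod.exists_nsmul_nsmul_eq_zero_and_nsmul_ne_zero_iff [NeZero n] (a N : ℕ) :
    (∃ x : ZMod n, N • a • x = 0 ∧ a • x ≠ 0) ↔ 2 ≤ N.gcd (n / n.gcd a) := by
  rw [natCast_zmod_surjective.exists, ← ZMod.addOrderOf_coe a (NeZero.ne n),
    ← _root_.exists_nsmul_nsmul_eq_zero_and_nsmul_ne_zero_iff (addOrderOf_pos _)]
  simp only [nsmul_eq_mul, mul_comm (a : ZMod n)]

theorem ZMod.exists_nsmul_eq_zero_and_ne_zero_iff [NeZero n] (N : ℕ) :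
    (∃ x : ZMod n, N • x = 0 ∧ x ≠ 0) ↔ 2 ≤ N.gcd n := by
  simpa only [one_nsmul, Nat.gcd_one_right, Nat.div_one] using
    ZMod.exists_nsmul_nsmul_eq_zero_and_nsmul_ne_zero_iff (n := n) 1 N

theorem geom_sum_stdAddChar_eq_zero_iff [NeZero n] {N : ℕ} (hN : N ≠ 0) (y : ZMod n) :
    ∑ r ∈ range N, stdAddChar y ^ r = 0 ↔ N • y = 0 ∧ y ≠ 0 := by
  rw [geom_sum_eq_zero_iff hN, ← AddChar.map_nsmul_eq_pow,
    ← AddChar.map_zero_eq_one (stdAddChar (N := n)), injective_stdAddChar.eq_iff,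
    injective_stdAddChar.ne_iff]

theorem det_circulant_eq_prod_sum_stdAddChar [NeZero n] (c : ZMod n → ℂ) :
    (circulant c).det = ∏ m, ∑ d, c d * stdAddChar (d * m) := by
  set F := Matrix.of fun u m : ZMod n => stdAddChar (-(m * u))
  have hF : F.det ≠ 0 := by
    have : F = LinearMap.toMatrix' (dft : (ZMod n → ℂ) ≃ₗ[ℂ] (ZMod n → ℂ)).toLinearMap := by
      ext u m
      simp [F, LinearMap.toMatrix'_apply, dft_apply, Pi.single_apply]
    rw [this, LinearMap.det_toMatrix']
    exact (dft (N := n) (E := ℂ)).isUnit_det'.ne_zero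
  have hmul : circulant c * F = F * diagonal fun m => ∑ d, c d * stdAddChar (d * m) := by
    ext u m
    rw [mul_diagonal, mul_apply]
    simp only [F, of_apply, circulant_apply, mul_sum]
    refine Fintype.sum_equiv (Equiv.subLeft u) _ _ fun d => ?_
    rw [Equiv.subLeft_apply, mul_left_comm, ← AddChar.map_add_eq_mul]
    ring_nf
  have := congrArg det hmul
  rw [det_mul, det_mul, det_diagonal, mul_comm] at this
  exact mul_left_cancel₀ hF this

/-- The exponents of the representer polynomial `γ`, read in `ZMod n`. -/
def representerSupport (n i j k ℓ : ℕ) : Finset (ZMod n) :=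
  (range (k + 1) ×ˢ Icc i (i + ℓ)).image fun p => ((p.2 + p.1 * j : ℕ) : ZMod n)

theorem mem_representerSupport {i j k ℓ : ℕ} {d : ZMod n} :
    d ∈ representerSupport n i j k ℓ ↔
      ∃ t' ≤ k, ∃ s', i ≤ s' ∧ s' ≤ i + ℓ ∧ d = ((s' + t' * j : ℕ) : ZMod n) := by
  simp only [representerSupport, mem_image, mem_product, mem_range, mem_Icc, Nat.lt_succ_iff]
  constructor
  · rintro ⟨⟨t, s⟩, ⟨ht, hs₁, hs₂⟩, rfl⟩
    exact ⟨t, ht, s, hs₁, hs₂, rfl⟩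
  · rintro ⟨t, ht, s, hs₁, hs₂, rfl⟩
    exact ⟨(t, s), ⟨ht, hs₁, hs₂⟩, rfl⟩

theorem sum_representerSupport {M : Type*} [AddCommMonoid M] {i j k ℓ : ℕ} (hℓj : ℓ < j)
    (hlt : k * j + i + ℓ < n) (f : ZMod n → M) :
    ∑ d ∈ representerSupport n i j k ℓ, f d =
      ∑ t ∈ range (k + 1), ∑ s ∈ Icc i (i + ℓ), f ((s + t * j : ℕ) : ZMod n) := by
  rw [representerSupport, sum_image, sum_product]
  rintro ⟨t₁, s₁⟩ h₁ ⟨t₂, s₂⟩ h₂ h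
  simp only [coe_product, Set.mem_prod, coe_range, Set.mem_Iio, mem_coe] at h₁ h₂
  have hbound : ∀ t s, t < k + 1 → s ∈ Icc i (i + ℓ) → s + t * j < n := fun t s ht hs => by
    have := Nat.mul_le_mul_right j (Nat.lt_succ_iff.mp ht)
    rw [mem_Icc] at hs
    omega
  rw [ZMod.natCast_eq_natCast_iff', Nat.mod_eq_of_lt (hbound _ _ h₁.1 h₁.2),
    Nat.mod_eq_of_lt (hbound _ _ h₂.1 h₂.2)] at h
  obtain ⟨rfl, rfl⟩ := Nat.eq_and_eq_of_add_mul_eq_add_mul hℓj h₁.2 h₂.2 h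
  rfl

theorem sum_representerSupport_stdAddChar [NeZero n] {i j k ℓ : ℕ} (hℓj : ℓ < j)
    (hlt : k * j + i + ℓ < n) (x : ZMod n) :
    ∑ d, (if d ∈ representerSupport n i j k ℓ then 1 else 0) * stdAddChar (d * x) =
      stdAddChar x ^ i * (∑ r ∈ range (ℓ + 1), stdAddChar x ^ r) *
        ∑ t ∈ range (k + 1), (stdAddChar x ^ j) ^ t := by
  simp only [ite_mul, one_mul, zero_mul, sum_ite_mem, univ_inter,
    sum_representerSupport hℓj hlt, ← nsmul_eq_mul, AddChar.map_nsmul_eq_pow,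
    sum_range_sum_Icc_pow]

end ZMod

/-- The circulant digraph `C_n^{i,j,k,ℓ}` with representer polynomial
`x^i (1 + x + ⋯ + x^ℓ)(1 + x^j + ⋯ + x^{kj})` is singular iff
`gcd(ℓ+1, n) ≥ 2` or `gcd(k+1, n / gcd(n,j)) ≥ 2`. -/
theorem Cnijkl_singular_iff (n i j k ℓ : ℕ) [NeZero n]
    (hjl : ℓ < j) (hlt : k * j + i + ℓ < n) :
    (Matrix.of fun u v : ZMod n =>
        if ∃ t' ≤ k, ∃ s', i ≤ s' ∧ s' ≤ i + ℓ ∧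
            (v - u) = ((s' + t' * j : ℕ) : ZMod n) then (1 : ℚ) else 0).det = 0 ↔
      (2 ≤ Nat.gcd (ℓ + 1) n ∨ 2 ≤ Nat.gcd (k + 1) (n / Nat.gcd n j)) := by
  set c : ZMod n → ℚ := fun d => if d ∈ representerSupport n i j k ℓ then 1 else 0
  have hM : (Matrix.of fun u v : ZMod n =>
      if ∃ t' ≤ k, ∃ s', i ≤ s' ∧ s' ≤ i + ℓ ∧
        (v - u) = ((s' + t' * j : ℕ) : ZMod n) then (1 : ℚ) else 0) = (circulant c)ᵀ := by
    ext u v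
    simp only [c, of_apply, transpose_apply, circulant_apply, mem_representerSupport]
  rw [hM, det_transpose, ← map_eq_zero_iff _ (algebraMap ℚ ℂ).injective, RingHom.map_det,
    RingHom.mapMatrix_apply, map_circulant, det_circulant_eq_prod_sum_stdAddChar,
    prod_eq_zero_iff]
  have heigenvalue (x : ZMod n) : ∑ d, algebraMap ℚ ℂ (c d) * stdAddChar (d * x) = 0 ↔
      ((ℓ + 1) • x = 0 ∧ x ≠ 0) ∨ ((k + 1) • j • x = 0 ∧ j • x ≠ 0) := by
    have hψ : stdAddChar x ≠ 0 := by simp [stdAddChar_apply]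
    simp only [c, apply_ite (algebraMap ℚ ℂ), map_one, map_zero,
      sum_representerSupport_stdAddChar hjl hlt, mul_eq_zero, pow_eq_zero_iff', hψ, false_and,
      false_or, ← AddChar.map_nsmul_eq_pow stdAddChar j,
      geom_sum_stdAddChar_eq_zero_iff (Nat.succ_ne_zero _)]
  simp only [mem_univ, true_and, heigenvalue, exists_or, ZMod.exists_nsmul_eq_zero_and_ne_zero_iff,
    ZMod.exists_nsmul_nsmul_eq_zero_and_nsmul_ne_zero_iff]
end
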